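/- arXiv:2605.28957 — 4 statements merged into one kernel-verified Lean document; each statement's English description precedes it below -/
import Mathlib

section
/- Let X be a one-sided subshift and F = {log f_n} a sequence of positive continuous functions on X. If X is right balanced with respect to F, then F has bounded variation, i.e., there exists M ≥ 1 such that f_n(x)/f_n(y) ≤ M for all n and all x, y in the same cylinder of length n. -/
open scoped Classical BigOperators
open Filter MeasureTheory

namespace Paper

/-- Points of the full one-sided shift over `k` symbols. -/
abbrev Pt (k : ℕ) := ℕ → Fin k

variable {k : ℕ}

/-- The one-sided shift map. -/
def shift (x : Pt k) : Pt k := fun n => x (n + 1)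

/-- A one-sided subshift: a closed shift-invariant subset. -/
def IsSubshift (X : Set (Pt k)) : Prop := IsClosed X ∧ ∀ x ∈ X, shift x ∈ X

/-- The cylinder set `[u]` of a word `u` of length `n` inside `X`. -/
def cylinder (X : Set (Pt k)) {n : ℕ} (u : Fin n → Fin k) : Set (Pt k) :=
  {x | x ∈ X ∧ ∀ i : Fin n, x (i : ℕ) = u i}

/-- A word is allowable if its cylinder in `X` is nonempty. -/
def Allowable (X : Set (Pt k)) {n : ℕ} (u : Fin n → Fin k) : Prop :=
  (cylinder X u).Nonempty

/-- `B_n(X)`: the finite set of allowable words of length `n`. -/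
noncomputable def words (X : Set (Pt k)) (n : ℕ) : Finset (Fin n → Fin k) :=
  Finset.univ.filter fun u => Allowable X u

/-- `F_n(u)`: words `v` of length `n` with `uv` allowable. -/
noncomputable def Fext (X : Set (Pt k)) {m : ℕ} (u : Fin m → Fin k) (n : ℕ) :
    Finset (Fin n → Fin k) :=
  Finset.univ.filter fun v => Allowable X (Fin.append u v)

/-- `P_n(u)`: words `v` of length `n` with `vu` allowable. -/
noncomputable def Pext (X : Set (Pt k)) {m : ℕ} (u : Fin m → Fin k) (n : ℕ) :
    Finset (Fin n → Fin k) :=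
  Finset.univ.filter fun v => Allowable X (Fin.append v u)

/-- `F = {log f_n}` is a sequence of positive continuous functions on `X`. -/
def GoodSeq (X : Set (Pt k)) (f : ℕ → Pt k → ℝ) : Prop :=
  ∀ n, ContinuousOn (f n) X ∧ ∀ x ∈ X, 0 < f n x

/-- The right balanced condition with constant `C` and threshold `K`. -/
def RightBalancedWith (X : Set (Pt k)) (f : ℕ → Pt k → ℝ) (C : ℝ) (K : ℕ) : Prop :=
  ∀ m n : ℕ, 0 < m → K ≤ n → ∀ u : Fin m → Fin k, u ∈ words X m →
    ∀ xu ∈ cylinder X u,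
    ∀ y : (Fin n → Fin k) → Pt k,
      (∀ v ∈ Fext X u n, y v ∈ cylinder X (Fin.append u v)) →
    ∀ z : (Fin n → Fin k) → Pt k,
      (∀ w ∈ words X n, z w ∈ cylinder X w) →
      1 / C ≤ (∑ v ∈ Fext X u n, f (m + n) (y v)) /
          (f m xu * ∑ w ∈ words X n, f n (z w)) ∧
      (∑ v ∈ Fext X u n, f (m + n) (y v)) /
          (f m xu * ∑ w ∈ words X n, f n (z w)) ≤ C

/-- The left balanced condition with constant `C` and threshold `K`. -/
def LeftBalancedWith (X : Set (Pt k)) (f : ℕ → Pt k → ℝ) (C : ℝ) (K : ℕ) : Prop :=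
  ∀ m n : ℕ, 0 < m → K ≤ n → ∀ u : Fin m → Fin k, u ∈ words X m →
    ∀ xu ∈ cylinder X u,
    ∀ y : (Fin n → Fin k) → Pt k,
      (∀ v ∈ Pext X u n, y v ∈ cylinder X (Fin.append v u)) →
    ∀ z : (Fin n → Fin k) → Pt k,
      (∀ w ∈ words X n, z w ∈ cylinder X w) →
      1 / C ≤ (∑ v ∈ Pext X u n, f (n + m) (y v)) /
          (f m xu * ∑ w ∈ words X n, f n (z w)) ∧
      (∑ v ∈ Pext X u n, f (n + m) (y v)) /
          (f m xu * ∑ w ∈ words X n, f n (z w)) ≤ C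

def RightBalanced (X : Set (Pt k)) (f : ℕ → Pt k → ℝ) : Prop :=
  ∃ C : ℝ, 1 ≤ C ∧ ∃ K : ℕ, 1 ≤ K ∧ RightBalancedWith X f C K

def LeftBalanced (X : Set (Pt k)) (f : ℕ → Pt k → ℝ) : Prop :=
  ∃ C : ℝ, 1 ≤ C ∧ ∃ K : ℕ, 1 ≤ K ∧ LeftBalancedWith X f C K

def Balanced (X : Set (Pt k)) (f : ℕ → Pt k → ℝ) : Prop :=
  RightBalanced X f ∧ LeftBalanced X f

/-- Boundedly supermultiplicative with constant `C` and threshold `K`. -/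
def BSMWith (X : Set (Pt k)) (f : ℕ → Pt k → ℝ) (C : ℝ) (K : ℕ) : Prop :=
  ∀ m n : ℕ, 0 < m → K ≤ n →
    ∀ a : (Fin m → Fin k) → Pt k, (∀ u ∈ words X m, a u ∈ cylinder X u) →
    ∀ b : (Fin n → Fin k) → Pt k, (∀ v ∈ words X n, b v ∈ cylinder X v) →
    ∀ c : (Fin (m + n) → Fin k) → Pt k, (∀ w ∈ words X (m + n), c w ∈ cylinder X w) →
      1 / C ≤ ((∑ u ∈ words X m, f m (a u)) * (∑ v ∈ words X n, f n (b v))) /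
          (∑ w ∈ words X (m + n), f (m + n) (c w)) ∧
      ((∑ u ∈ words X m, f m (a u)) * (∑ v ∈ words X n, f n (b v))) /
          (∑ w ∈ words X (m + n), f (m + n) (c w)) ≤ C

def BSM (X : Set (Pt k)) (f : ℕ → Pt k → ℝ) : Prop :=
  ∃ C : ℝ, 1 ≤ C ∧ ∃ K : ℕ, 1 ≤ K ∧ BSMWith X f C K

/-- The Gibbs inequality for `μ` with pressure constant `P` and constant `C`. -/
def GibbsWith (X : Set (Pt k)) (f : ℕ → Pt k → ℝ) (μ : Measure (Pt k)) (P C : ℝ) : Prop :=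
  ∀ n : ℕ, 0 < n → ∀ u : Fin n → Fin k, u ∈ words X n → ∀ x ∈ cylinder X u,
    1 / C ≤ (μ (cylinder X u)).toReal / (Real.exp (-(n : ℝ) * P) * f n x) ∧
    (μ (cylinder X u)).toReal / (Real.exp (-(n : ℝ) * P) * f n x) ≤ C

/-- `μ` is a (Borel probability) Gibbs measure on `X` for the sequence `f`. -/
def IsGibbs (X : Set (Pt k)) (f : ℕ → Pt k → ℝ) (μ : Measure (Pt k)) : Prop :=
  IsProbabilityMeasure μ ∧ μ Xᶜ = 0 ∧ ∃ P C : ℝ, 0 < C ∧ GibbsWith X f μ P C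

/-- Shift invariance of a measure. -/
def InvariantM (μ : Measure (Pt k)) : Prop :=
  ∀ s : Set (Pt k), MeasurableSet s → μ (shift ⁻¹' s) = μ s

/-- Ergodicity of a measure with respect to the shift. -/
def ErgodicM (μ : Measure (Pt k)) : Prop :=
  ∀ s : Set (Pt k), MeasurableSet s → shift ⁻¹' s = s → μ s = 0 ∨ μ s = 1

/-- Subadditivity of the sequence with constant `C`. -/
def SubaddWith (X : Set (Pt k)) (f : ℕ → Pt k → ℝ) (C : ℝ) : Prop :=
  0 ≤ C ∧ ∀ x ∈ X, ∀ m n : ℕ, f (m + n) x ≤ Real.exp C * (f m x * f n (shift^[m] x))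

def Subadditive (X : Set (Pt k)) (f : ℕ → Pt k → ℝ) : Prop := ∃ C, SubaddWith X f C

/-- Superadditivity of the sequence with constant `C`. -/
def SuperaddWith (X : Set (Pt k)) (f : ℕ → Pt k → ℝ) (C : ℝ) : Prop :=
  0 ≤ C ∧ ∀ x ∈ X, ∀ m n : ℕ, Real.exp (-C) * (f m x * f n (shift^[m] x)) ≤ f (m + n) x

def Superadditive (X : Set (Pt k)) (f : ℕ → Pt k → ℝ) : Prop := ∃ C, SuperaddWith X f C

/-- Bounded variation with constant `M`. -/
def BddVarWith (X : Set (Pt k)) (f : ℕ → Pt k → ℝ) (M : ℝ) : Prop :=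
  1 ≤ M ∧ ∀ n : ℕ, ∀ x ∈ X, ∀ y ∈ X, (∀ i < n, x i = y i) → f n x / f n y ≤ M

def BddVar (X : Set (Pt k)) (f : ℕ → Pt k → ℝ) : Prop := ∃ M, BddVarWith X f M

/-- The partition sums `Z_n(F)`. -/
noncomputable def Zn (X : Set (Pt k)) (f : ℕ → Pt k → ℝ) (n : ℕ) : ℝ :=
  ∑ u ∈ words X n, sSup (f n '' cylinder X u)

/-- The topological pressure `P(F) = limsup (1/n) log Z_n(F)`. -/
noncomputable def pressure (X : Set (Pt k)) (f : ℕ → Pt k → ℝ) : ℝ :=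
  Filter.limsup (fun n : ℕ => Real.log (Zn X f n) / n) atTop

/-- Condition (C2): quasi-multiplicativity. -/
def QuasiMult (X : Set (Pt k)) (f : ℕ → Pt k → ℝ) : Prop :=
  ∃ k₀ : ℕ, ∃ D : ℝ, 0 < D ∧ D < 1 ∧
    ∀ (m n : ℕ) (u : Fin m → Fin k) (v : Fin n → Fin k),
      Allowable X u → Allowable X v →
      ∃ i, i ≤ k₀ ∧ ∃ w : Fin i → Fin k,
        Allowable X (Fin.append (Fin.append u w) v) ∧
        D * sSup (f m '' cylinder X u) * sSup (f n '' cylinder X v) ≤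
          sSup (f (m + i + n) '' cylinder X (Fin.append (Fin.append u w) v))

/-- Strong specification property with specification number `s`. -/
def StrongSpec (X : Set (Pt k)) (s : ℕ) : Prop :=
  ∀ (m n : ℕ) (u : Fin m → Fin k) (v : Fin n → Fin k),
    Allowable X u → Allowable X v →
    ∃ w : Fin s → Fin k, Allowable X (Fin.append (Fin.append u w) v)

/-- Irreducibility of a subshift. -/
def IrreducibleShift (X : Set (Pt k)) : Prop :=
  ∀ (m n : ℕ) (u : Fin m → Fin k) (v : Fin n → Fin k),
    Allowable X u → Allowable X v →
    ∃ (l : ℕ) (w : Fin l → Fin k), Allowable X (Fin.append (Fin.append u w) v)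

/-- The `n`-th partition entropy of `μ`. -/
noncomputable def Hn (X : Set (Pt k)) (μ : Measure (Pt k)) (n : ℕ) : ℝ :=
  -∑ u ∈ words X n, (μ (cylinder X u)).toReal * Real.log (μ (cylinder X u)).toReal

/-- Measure-theoretic entropy of an invariant measure on a subshift. -/
noncomputable def entropy (X : Set (Pt k)) (μ : Measure (Pt k)) : ℝ :=
  ⨅ n : ℕ, Hn X μ (n + 1) / (n + 1)

/-- The key partition-sum bound appearing in Lemma 2.2. -/
def KeyBound (X : Set (Pt k)) (f : ℕ → Pt k → ℝ) (C P : ℝ) : Prop :=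
  ∀ n : ℕ, 0 < n → ∀ z : (Fin n → Fin k) → Pt k,
    (∀ u ∈ words X n, z u ∈ cylinder X u) →
    1 / C ≤ Real.exp ((n : ℝ) * P) / (∑ u ∈ words X n, f n (z u)) ∧
    Real.exp ((n : ℝ) * P) / (∑ u ∈ words X n, f n (z u)) ≤ C


lemma ratio_aux {S T fx fy C : ℝ} (hS : 0 < S) (hT : 0 < T) (hx : 0 < fx) (hy : 0 < fy)
    (hC : 0 < C) (h1 : 1 / C ≤ S / (fx * T)) (h2 : S / (fy * T) ≤ C) : fx / fy ≤ C * C := by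
  rw [div_le_div_iff₀ hC (by positivity)] at h1
  rw [div_le_iff₀ (by positivity)] at h2
  rw [div_le_iff₀ hy]
  nlinarith [mul_le_mul_of_nonneg_right h2 hC.le, mul_pos hT hy, hT]

/-- right balanced implies bounded variation. -/
theorem stmt0 {k : ℕ} (X : Set (Pt k)) (f : ℕ → Pt k → ℝ)
    (hX : IsSubshift X) (hf : GoodSeq X f)
    (h : RightBalanced X f) : BddVar X f := by
  obtain ⟨C, hC1, K, hK1, hbal⟩ := h
  rcases Set.eq_empty_or_nonempty X with hXe | ⟨x0, hx0⟩
  · exact ⟨1, le_refl 1, fun n x hx => by simp [hXe] at hx⟩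
  obtain ⟨a, haX, ha⟩ := (hX.1.isCompact).exists_isMaxOn ⟨x0, hx0⟩ (hf 0).1
  obtain ⟨b, hbX, hb⟩ := (hX.1.isCompact).exists_isMinOn ⟨x0, hx0⟩ (hf 0).1
  refine ⟨max (C * C) (f 0 a / f 0 b), le_trans (by nlinarith) (le_max_left _ _), ?_⟩
  intro n x hx y hy hxy
  rcases Nat.eq_zero_or_pos n with rfl | hn
  · refine le_trans ?_ (le_max_right _ _)
    exact div_le_div₀ ((hf 0).2 a haX).le (ha hx) ((hf 0).2 b hbX) (hb hy)
  · refine le_trans ?_ (le_max_left _ _)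
    set u : Fin n → Fin k := fun i => x i with hu
    have hxc : x ∈ cylinder X u := ⟨hx, fun i => rfl⟩
    have hyc : y ∈ cylinder X u := ⟨hy, fun i => (hxy i i.isLt).symm⟩
    have huw : u ∈ words X n := Finset.mem_filter.mpr ⟨Finset.mem_univ _, ⟨x, hxc⟩⟩
    set yfun : (Fin K → Fin k) → Pt k := fun v =>
      if h : (cylinder X (Fin.append u v)).Nonempty then h.some else x with hyfun
    set zfun : (Fin K → Fin k) → Pt k := fun w =>
      if h : (cylinder X w).Nonempty then h.some else x with hzfun
    have hyf : ∀ v ∈ Fext X u K, yfun v ∈ cylinder X (Fin.append u v) := by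
      intro v hv
      have hA : (cylinder X (Fin.append u v)).Nonempty := (Finset.mem_filter.mp hv).2
      simp only [hyfun, dif_pos hA]
      exact hA.some_mem
    have hzf : ∀ w ∈ words X K, zfun w ∈ cylinder X w := by
      intro w hw
      have hA : (cylinder X w).Nonempty := (Finset.mem_filter.mp hw).2
      simp only [hzfun, dif_pos hA]
      exact hA.some_mem
    have hbx := hbal n K hn le_rfl u huw x hxc yfun hyf zfun hzf
    have hby := hbal n K hn le_rfl u huw y hyc yfun hyf zfun hzf
    have hFne : (Fext X u K).Nonempty := by
      refine ⟨fun i => x (n + i), Finset.mem_filter.mpr ⟨Finset.mem_univ _, ⟨x, hx, ?_⟩⟩⟩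
      intro i
      refine Fin.addCases (motive := fun i =>
        x (i : ℕ) = Fin.append u (fun j : Fin K => x (n + j)) i) ?_ ?_ i
      · intro j; simp [Fin.append_left, hu]
      · intro j; simp [Fin.append_right]
    have hWne : (words X K).Nonempty :=
      ⟨fun i => x0 i, Finset.mem_filter.mpr ⟨Finset.mem_univ _, ⟨x0, hx0, fun i => rfl⟩⟩⟩
    have hS : 0 < ∑ v ∈ Fext X u K, f (n + K) (yfun v) :=
      Finset.sum_pos (fun v hv => (hf (n + K)).2 _ (hyf v hv).1) hFne
    have hT : 0 < ∑ w ∈ words X K, f K (zfun w) :=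
      Finset.sum_pos (fun w hw => (hf K).2 _ (hzf w hw).1) hWne
    exact ratio_aux hS hT ((hf n).2 x hx) ((hf n).2 y hy) (by linarith) hbx.1 hby.2

end Paper
end

section
/- Let X be a one-sided subshift and F = {log f_n} a sequence of positive continuous functions on X. Then X is boundedly supermultiplicative with respect to F if and only if there exist C ≥ 1 and P ∈ ℝ such that for each n ∈ ℕ, 1/C ≤ e^{nP} / (Σ_{u∈B_n(X)} f_n(x_u)) ≤ C for each choice of points x_u ∈ [u]. Moreover, in that case P equals the topological pressure P(F) = lim sup_{n→∞} (1/n) log Z_n(F), where Z_n(F) = Σ_{u∈B_n(X)} sup{f_n(x) : x ∈ [u]}. -/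
open scoped Classical BigOperators
open Filter MeasureTheory

namespace Paper

variable {k : ℕ}

section Aux

variable {k : ℕ}

/-- Sum of `f n` over a choice of points in cylinders. -/
noncomputable def Ssum (X : Set (Pt k)) (f : ℕ → Pt k → ℝ) {n : ℕ}
    (z : (Fin n → Fin k) → Pt k) : ℝ :=
  ∑ u ∈ words X n, f n (z u)

lemma aux_exists_fun (X : Set (Pt k)) {n : ℕ} (hn : 0 < n) :
    ∃ z : (Fin n → Fin k) → Pt k, ∀ u ∈ words X n, z u ∈ cylinder X u := by
  rcases Nat.eq_zero_or_pos k with rfl | hk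
  · exact ⟨fun u => (u ⟨0, hn⟩).elim0, fun u _ => (u ⟨0, hn⟩).elim0⟩
  · refine ⟨fun u => if h : Allowable X u then h.choose else (fun _ => ⟨0, hk⟩), fun u hu => ?_⟩
    have h : Allowable X u := (Finset.mem_filter.mp hu).2
    simp only [dif_pos h]
    exact h.choose_spec

lemma aux_exists_choice {X : Set (Pt k)} (hXne : X.Nonempty) (n : ℕ) :
    ∃ z : (Fin n → Fin k) → Pt k, ∀ u ∈ words X n, z u ∈ cylinder X u := by
  refine ⟨fun u => if h : Allowable X u then h.choose else hXne.choose, fun u hu => ?_⟩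
  have h : Allowable X u := (Finset.mem_filter.mp hu).2
  simp only [dif_pos h]
  exact h.choose_spec

lemma aux_words_nonempty {X : Set (Pt k)} (hXne : X.Nonempty) (n : ℕ) :
    (words X n).Nonempty := by
  obtain ⟨x, hx⟩ := hXne
  exact ⟨fun i => x i, Finset.mem_filter.mpr ⟨Finset.mem_univ _, ⟨x, hx, fun i => rfl⟩⟩⟩

lemma aux_words_empty {X : Set (Pt k)} (hXe : X = ∅) (n : ℕ) : words X n = ∅ := by
  refine Finset.eq_empty_of_forall_notMem fun u hu => ?_
  obtain ⟨x, hx⟩ := (Finset.mem_filter.mp hu).2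
  rw [hXe] at hx
  exact hx.1

lemma aux_sum_pos {X : Set (Pt k)} {f : ℕ → Pt k → ℝ} (hf : GoodSeq X f)
    (hXne : X.Nonempty) {n : ℕ} {z : (Fin n → Fin k) → Pt k}
    (hz : ∀ u ∈ words X n, z u ∈ cylinder X u) :
    0 < Ssum X f z :=
  Finset.sum_pos (fun u hu => (hf n).2 _ ((hz u hu).1)) (aux_words_nonempty hXne n)

lemma aux_abs_log_le {x C : ℝ} (hx : 0 < x) (hC : 1 ≤ C) (h1 : 1 / C ≤ x) (h2 : x ≤ C) :
    |Real.log x| ≤ Real.log C := by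
  have hC0 : (0:ℝ) < C := lt_of_lt_of_le one_pos hC
  rw [abs_le]
  constructor
  · have h := Real.log_le_log (by positivity) h1
    rwa [Real.log_div one_ne_zero hC0.ne', Real.log_one, zero_sub] at h
  · exact Real.log_le_log hx h2

lemma aux_bounds_of_abs_log {x C : ℝ} (hx : 0 < x) (hC : 0 < C)
    (h : |Real.log x| ≤ Real.log C) : 1 / C ≤ x ∧ x ≤ C := by
  rw [abs_le] at h
  constructor
  · have h' := Real.exp_le_exp.mpr h.1
    rwa [Real.exp_log hx, Real.exp_neg, Real.exp_log hC, ← one_div] at h'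
  · have h' := Real.exp_le_exp.mpr h.2
    rwa [Real.exp_log hx, Real.exp_log hC] at h'

lemma aux_cylinder_compact {X : Set (Pt k)} (hX : IsClosed X) {n : ℕ} (u : Fin n → Fin k) :
    IsCompact (cylinder X u) := by
  have h1 : cylinder X u = X ∩ ⋂ i : Fin n, (fun x : Pt k => x (i : ℕ)) ⁻¹' {u i} := by
    ext x
    simp [cylinder, Set.mem_iInter]
  have h2 : IsClosed (cylinder X u) := by
    rw [h1]
    exact hX.inter (isClosed_iInter fun i =>
      IsClosed.preimage (continuous_apply _) isClosed_singleton)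
  exact h2.isCompact

lemma aux_ratio {X : Set (Pt k)} {f : ℕ → Pt k → ℝ} (hX : IsSubshift X) (hf : GoodSeq X f)
    (hXne : X.Nonempty) (n : ℕ) :
    ∃ r : ℝ, 1 ≤ r ∧ ∀ (z z' : (Fin n → Fin k) → Pt k),
      (∀ u ∈ words X n, z u ∈ cylinder X u) → (∀ u ∈ words X n, z' u ∈ cylinder X u) →
      Ssum X f z ≤ r * Ssum X f z' := by
  have hXc : IsCompact X := hX.1.isCompact
  obtain ⟨xm, hxm, hmin⟩ := hXc.exists_isMinOn hXne (hf n).1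
  obtain ⟨xM, hxM, hmax⟩ := hXc.exists_isMaxOn hXne (hf n).1
  have hm0 : 0 < f n xm := (hf n).2 xm hxm
  have hmM : f n xm ≤ f n xM := hmin hxM
  have hr1 : (1:ℝ) ≤ f n xM / f n xm := (one_le_div hm0).mpr hmM
  refine ⟨f n xM / f n xm, hr1, fun z z' hz hz' => ?_⟩
  have h1 : Ssum X f z ≤ (words X n).card * f n xM := by
    have hle : ∀ u ∈ words X n, f n (z u) ≤ f n xM := fun u hu => hmax ((hz u hu).1)
    have := Finset.sum_le_sum hle
    rwa [Finset.sum_const, nsmul_eq_mul] at this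
  have h2 : ((words X n).card : ℝ) * f n xm ≤ Ssum X f z' := by
    have hle : ∀ u ∈ words X n, f n xm ≤ f n (z' u) := fun u hu => hmin ((hz' u hu).1)
    have := Finset.sum_le_sum hle
    rwa [Finset.sum_const, nsmul_eq_mul] at this
  have hr0 : (0:ℝ) ≤ f n xM / f n xm := le_trans zero_le_one hr1
  calc Ssum X f z ≤ (words X n).card * f n xM := h1
    _ = (f n xM / f n xm) * (((words X n).card : ℝ) * f n xm) := by
        field_simp
    _ ≤ (f n xM / f n xm) * Ssum X f z' := mul_le_mul_of_nonneg_left h2 hr0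

lemma aux_keybound_empty {X : Set (Pt k)} {f : ℕ → Pt k → ℝ} (hXe : X = ∅) {C P : ℝ}
    (hC : 1 ≤ C) (hKB : KeyBound X f C P) : False := by
  obtain ⟨z, hz⟩ := aux_exists_fun X (n := 1) one_pos
  have h := (hKB 1 one_pos z hz).1
  rw [aux_words_empty hXe 1] at h
  simp only [Finset.sum_empty, div_zero] at h
  have hC0 : (0:ℝ) < C := lt_of_lt_of_le one_pos hC
  have : (0:ℝ) < 1 / C := by positivity
  linarith

lemma aux_bsm_empty {X : Set (Pt k)} {f : ℕ → Pt k → ℝ} (hXe : X = ∅) {C : ℝ} {K : ℕ}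
    (hC : 1 ≤ C) (hK : 1 ≤ K) (hB : BSMWith X f C K) : False := by
  obtain ⟨a, ha⟩ := aux_exists_fun X (n := 1) one_pos
  obtain ⟨b, hb⟩ := aux_exists_fun X (n := K) (by omega)
  obtain ⟨cc, hcc⟩ := aux_exists_fun X (n := 1 + K) (by omega)
  have h := (hB 1 K one_pos le_rfl a ha b hb cc hcc).1
  simp only [aux_words_empty hXe, Finset.sum_empty, mul_zero, zero_div] at h
  have hC0 : (0:ℝ) < C := lt_of_lt_of_le one_pos hC
  have : (0:ℝ) < 1 / C := by positivity
  linarith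

lemma aux_key {X : Set (Pt k)} {f : ℕ → Pt k → ℝ} (hf : GoodSeq X f) (hXne : X.Nonempty)
    {C : ℝ} {K : ℕ} (hC : 1 ≤ C) (hB : BSMWith X f C K)
    {m n : ℕ} (hm : 0 < m) (hn : K ≤ n)
    {zm : (Fin m → Fin k) → Pt k} (hzm : ∀ u ∈ words X m, zm u ∈ cylinder X u)
    {zn : (Fin n → Fin k) → Pt k} (hzn : ∀ u ∈ words X n, zn u ∈ cylinder X u)
    {zmn : (Fin (m + n) → Fin k) → Pt k}
    (hzmn : ∀ u ∈ words X (m + n), zmn u ∈ cylinder X u) :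
    |Real.log (Ssum X f zmn) - Real.log (Ssum X f zm) - Real.log (Ssum X f zn)| ≤
      Real.log C := by
  have h := hB m n hm hn zm hzm zn hzn zmn hzmn
  have p1 : 0 < Ssum X f zm := aux_sum_pos hf hXne hzm
  have p2 : 0 < Ssum X f zn := aux_sum_pos hf hXne hzn
  have p3 : 0 < Ssum X f zmn := aux_sum_pos hf hXne hzmn
  have hx : 0 < Ssum X f zm * Ssum X f zn / Ssum X f zmn :=
    div_pos (mul_pos p1 p2) p3
  have habs := aux_abs_log_le hx hC h.1 h.2
  rw [Real.log_div (mul_pos p1 p2).ne' p3.ne', Real.log_mul p1.ne' p2.ne'] at habs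
  rw [abs_le] at habs ⊢
  constructor <;> linarith [habs.1, habs.2]

lemma aux_kb_log {X : Set (Pt k)} {f : ℕ → Pt k → ℝ} (hf : GoodSeq X f) (hXne : X.Nonempty)
    {C P : ℝ} (hC : 1 ≤ C) (hKB : KeyBound X f C P) {n : ℕ} (hn : 0 < n)
    {z : (Fin n → Fin k) → Pt k} (hz : ∀ u ∈ words X n, z u ∈ cylinder X u) :
    |Real.log (Ssum X f z) - n * P| ≤ Real.log C := by
  have h := hKB n hn z hz
  have hpos : 0 < Ssum X f z := aux_sum_pos hf hXne hz
  have hx : 0 < Real.exp ((n : ℝ) * P) / Ssum X f z := div_pos (Real.exp_pos _) hpos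
  have habs := aux_abs_log_le hx hC h.1 h.2
  rw [Real.log_div (Real.exp_ne_zero _) hpos.ne', Real.log_exp] at habs
  rw [abs_sub_comm]
  exact habs

/-- Approximately additive sequences are approximately linear. -/
lemma aux_linearize {a : ℕ → ℝ} {d : ℝ} (hd : 0 ≤ d)
    (h : ∀ m n : ℕ, 1 ≤ m → 1 ≤ n → |a (m + n) - a m - a n| ≤ d) :
    ∃ P : ℝ, ∀ n : ℕ, 1 ≤ n → |a n - n * P| ≤ d := by
  have hmul : ∀ m n : ℕ, 1 ≤ m → 1 ≤ n → |a (m * n) - m * a n| ≤ m * d := by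
    intro m n hm hn
    induction m, hm using Nat.le_induction with
    | base => simpa using hd
    | succ m hm ih =>
      have hmn : 1 ≤ m * n := Nat.one_le_iff_ne_zero.mpr (by positivity)
      have hkey := h (m * n) n hmn hn
      rw [add_one_mul]
      push_cast
      rw [abs_le] at hkey ih ⊢
      constructor <;> nlinarith [hkey.1, hkey.2, ih.1, ih.2]
  have hdist : ∀ m n : ℕ, 1 ≤ m → 1 ≤ n →
      |a m / m - a n / n| ≤ d / m + d / n := by
    intro m n hm hn
    have hm0 : (0:ℝ) < m := by exact_mod_cast hm
    have hn0 : (0:ℝ) < n := by exact_mod_cast hn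
    have h1 := hmul m n hm hn
    have h2 := hmul n m hn hm
    rw [Nat.mul_comm n m] at h2
    have e1 : |a (m * n) / ((m : ℝ) * n) - a n / n| ≤ d / n := by
      have heq : a (m * n) / ((m : ℝ) * n) - a n / n = (a (m * n) - m * a n) / ((m : ℝ) * n) := by
        field_simp
      rw [heq, abs_div, abs_of_pos (mul_pos hm0 hn0)]
      calc |a (m * n) - (m : ℝ) * a n| / ((m : ℝ) * n) ≤ ((m : ℝ) * d) / ((m : ℝ) * n) :=
            (div_le_div_iff_of_pos_right (mul_pos hm0 hn0)).mpr h1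
        _ = d / n := mul_div_mul_left d n hm0.ne'
    have e2 : |a (m * n) / ((m : ℝ) * n) - a m / m| ≤ d / m := by
      have heq : a (m * n) / ((m : ℝ) * n) - a m / m = (a (m * n) - n * a m) / ((n : ℝ) * m) := by
        field_simp
      rw [heq, abs_div, abs_of_pos (mul_pos hn0 hm0)]
      calc |a (m * n) - (n : ℝ) * a m| / ((n : ℝ) * m) ≤ ((n : ℝ) * d) / ((n : ℝ) * m) :=
            (div_le_div_iff_of_pos_right (mul_pos hn0 hm0)).mpr h2
        _ = d / m := mul_div_mul_left d m hn0.ne'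
    calc |a m / m - a n / n| = |(a m / m - a (m * n) / ((m : ℝ) * n)) +
          (a (m * n) / ((m : ℝ) * n) - a n / n)| := by ring_nf
      _ ≤ |a m / m - a (m * n) / ((m : ℝ) * n)| + |a (m * n) / ((m : ℝ) * n) - a n / n| :=
          abs_add_le _ _
      _ ≤ d / m + d / n := by
          rw [abs_sub_comm]
          exact add_le_add e2 e1
  -- the sequence a (j+1) / (j+1) is Cauchy
  have hcast : ∀ j : ℕ, ((j + 1 : ℕ) : ℝ) = (j : ℝ) + 1 := by
    intro j; push_cast; ring
  have hcauchy : CauchySeq (fun j : ℕ => a (j + 1) / ((j + 1 : ℕ) : ℝ)) := by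
    apply cauchySeq_of_le_tendsto_0 (fun N : ℕ => d / ((N + 1 : ℕ) : ℝ) + d / ((N + 1 : ℕ) : ℝ))
    · intro p q N hp hq
      rw [Real.dist_eq]
      refine (hdist (p + 1) (q + 1) (by omega) (by omega)).trans (add_le_add ?_ ?_)
      · exact div_le_div_of_nonneg_left hd (by exact_mod_cast Nat.succ_pos N)
          (by exact_mod_cast (by omega : N + 1 ≤ p + 1))
      · exact div_le_div_of_nonneg_left hd (by exact_mod_cast Nat.succ_pos N)
          (by exact_mod_cast (by omega : N + 1 ≤ q + 1))
    · have hbase : Filter.Tendsto (fun N : ℕ => d / ((N + 1 : ℕ) : ℝ)) atTop (nhds 0) :=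
        (tendsto_const_div_atTop_nhds_zero_nat d).comp (tendsto_add_atTop_nat 1)
      simpa using hbase.add hbase
  obtain ⟨P, hP⟩ := cauchySeq_tendsto_of_complete hcauchy
  refine ⟨P, fun n hn => ?_⟩
  have hn0 : (0:ℝ) < n := by exact_mod_cast hn
  have hlim1 : Filter.Tendsto (fun j : ℕ => |a n / n - a (j + 1) / ((j + 1 : ℕ) : ℝ)|) atTop
      (nhds |a n / n - P|) := (tendsto_const_nhds.sub hP).abs
  have hlim2 : Filter.Tendsto (fun j : ℕ => d / n + d / ((j + 1 : ℕ) : ℝ)) atTop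
      (nhds (d / n + 0)) :=
    tendsto_const_nhds.add ((tendsto_const_div_atTop_nhds_zero_nat d).comp
      (tendsto_add_atTop_nat 1))
  have h3 : |a n / n - P| ≤ d / n + 0 :=
    le_of_tendsto_of_tendsto' hlim1 hlim2 fun j => hdist n (j + 1) hn (by omega)
  rw [add_zero] at h3
  have heq : a n - n * P = (n : ℝ) * (a n / n - P) := by
    field_simp
  rw [heq, abs_mul, abs_of_pos hn0]
  calc (n : ℝ) * |a n / n - P| ≤ (n : ℝ) * (d / n) :=
        mul_le_mul_of_nonneg_left h3 hn0.le
    _ = d := by field_simp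

lemma aux_forward {X : Set (Pt k)} {f : ℕ → Pt k → ℝ} (hX : IsSubshift X) (hf : GoodSeq X f)
    (hXne : X.Nonempty) {C : ℝ} (hC : 1 ≤ C) {K : ℕ} (hK : 1 ≤ K)
    (hB : BSMWith X f C K) :
    ∃ C' : ℝ, 1 ≤ C' ∧ ∃ P : ℝ, KeyBound X f C' P := by
  classical
  have hc0 : 0 ≤ Real.log C := Real.log_nonneg hC
  choose Z hZ using fun n => aux_exists_choice hXne n
  obtain ⟨a, ha⟩ : ∃ a : ℕ → ℝ, ∀ n, a n = Real.log (Ssum X f (Z n)) :=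
    ⟨_, fun n => rfl⟩
  have hadd : ∀ m n : ℕ, 1 ≤ m → K ≤ n → |a (m + n) - a m - a n| ≤ Real.log C := by
    intro m n hm hn
    rw [ha, ha, ha]
    exact aux_key hf hXne hC hB hm hn (hZ m) (hZ n) (hZ (m + n))
  have hadd3 : ∀ m n : ℕ, 1 ≤ m → 1 ≤ n → |a (m + n) - a m - a n| ≤ 3 * Real.log C := by
    intro m n hm hn
    have h1 := hadd (m + n) K (by omega) le_rfl
    have h2 := hadd m (n + K) hm (Nat.le_add_left K n)
    have h3 := hadd n K hn le_rfl
    rw [← Nat.add_assoc] at h2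
    rw [abs_le] at h1 h2 h3 ⊢
    constructor <;> linarith [h1.1, h1.2, h2.1, h2.2, h3.1, h3.2]
  obtain ⟨P, hP⟩ := aux_linearize (by linarith : (0:ℝ) ≤ 3 * Real.log C) hadd3
  choose r hr1 hr2 using fun n => aux_ratio hX hf hXne n
  have hcomp_small : ∀ n : ℕ, ∀ z : (Fin n → Fin k) → Pt k,
      (∀ u ∈ words X n, z u ∈ cylinder X u) →
      |Real.log (Ssum X f z) - a n| ≤ Real.log (r n) := by
    intro n z hz
    have h1 := hr2 n z (Z n) hz (hZ n)
    have h2 := hr2 n (Z n) z (hZ n) hz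
    have p1 : 0 < Ssum X f z := aux_sum_pos hf hXne hz
    have p2 : 0 < Ssum X f (Z n) := aux_sum_pos hf hXne (hZ n)
    have hrpos : 0 < r n := lt_of_lt_of_le one_pos (hr1 n)
    rw [ha, abs_le]
    constructor
    · have h := Real.log_le_log p2 h2
      rw [Real.log_mul hrpos.ne' p1.ne'] at h
      linarith
    · have h := Real.log_le_log p1 h1
      rw [Real.log_mul hrpos.ne' p2.ne'] at h
      linarith
  have hcomp_big : ∀ m : ℕ, 1 ≤ m → ∀ z : (Fin (m + K) → Fin k) → Pt k,
      (∀ u ∈ words X (m + K), z u ∈ cylinder X u) →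
      |Real.log (Ssum X f z) - a (m + K)| ≤ 2 * Real.log C := by
    intro m hm z hz
    have h1 := aux_key hf hXne hC hB hm (le_refl K) (hZ m) (hZ K) hz
    have h2 := hadd m K hm le_rfl
    rw [ha, ha, ha] at h2
    rw [ha]
    rw [abs_le] at h1 h2 ⊢
    constructor <;> linarith [h1.1, h1.2, h2.1, h2.2]
  have hKne : (Finset.Icc 1 K).Nonempty := ⟨1, Finset.mem_Icc.mpr ⟨le_rfl, hK⟩⟩
  obtain ⟨G, hG1, hG2⟩ : ∃ G : ℝ, (∀ n : ℕ, 1 ≤ n → n ≤ K → Real.log (r n) ≤ G) ∧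
      2 * Real.log C ≤ G :=
    ⟨max (Finset.sup' (Finset.Icc 1 K) hKne fun n => Real.log (r n)) (2 * Real.log C),
      fun n h1 h2 => le_trans (Finset.le_sup' (fun n => Real.log (r n)) (Finset.mem_Icc.mpr ⟨h1, h2⟩)) (le_max_left _ _),
      le_max_right _ _⟩
  have hG0 : 0 ≤ G := by linarith
  have hcomp : ∀ n : ℕ, 1 ≤ n → ∀ z : (Fin n → Fin k) → Pt k,
      (∀ u ∈ words X n, z u ∈ cylinder X u) →
      |Real.log (Ssum X f z) - a n| ≤ G := by
    intro n hn z hz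
    rcases le_or_gt n K with h | h
    · exact (hcomp_small n z hz).trans (hG1 n hn h)
    · obtain ⟨m, rfl⟩ : ∃ m, n = m + K := ⟨n - K, by omega⟩
      exact (hcomp_big m (by omega) z hz).trans hG2
  refine ⟨Real.exp (3 * Real.log C + G), Real.one_le_exp (by linarith), P, ?_⟩
  intro n hn z hz
  have hT : 0 < Ssum X f z := aux_sum_pos hf hXne hz
  have h1 := hcomp n hn z hz
  have h2 := hP n hn
  have habs : |Real.log (Real.exp ((n : ℝ) * P) / Ssum X f z)| ≤
      Real.log (Real.exp (3 * Real.log C + G)) := by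
    rw [Real.log_div (Real.exp_ne_zero _) hT.ne', Real.log_exp, Real.log_exp]
    rw [abs_le] at h1 h2 ⊢
    constructor <;> linarith [h1.1, h1.2, h2.1, h2.2]
  exact aux_bounds_of_abs_log (div_pos (Real.exp_pos _) hT) (Real.exp_pos _) habs

lemma aux_reverse {X : Set (Pt k)} {f : ℕ → Pt k → ℝ} (hf : GoodSeq X f)
    (hXne : X.Nonempty) {C P : ℝ} (hC : 1 ≤ C) (hKB : KeyBound X f C P) :
    BSM X f := by
  have hc0 : 0 ≤ Real.log C := Real.log_nonneg hC
  refine ⟨Real.exp (3 * Real.log C), Real.one_le_exp (by linarith), 1, le_rfl, ?_⟩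
  intro m n hm hn a ha b hb cc hcc
  have h1 := aux_kb_log hf hXne hC hKB hm ha
  have h2 := aux_kb_log hf hXne hC hKB (by omega : 0 < n) hb
  have h3 := aux_kb_log hf hXne hC hKB (by omega : 0 < m + n) hcc
  have pa : 0 < Ssum X f a := aux_sum_pos hf hXne ha
  have pb : 0 < Ssum X f b := aux_sum_pos hf hXne hb
  have pc : 0 < Ssum X f cc := aux_sum_pos hf hXne hcc
  have habs : |Real.log (Ssum X f a * Ssum X f b / Ssum X f cc)| ≤
      Real.log (Real.exp (3 * Real.log C)) := by
    rw [Real.log_exp, Real.log_div (mul_pos pa pb).ne' pc.ne', Real.log_mul pa.ne' pb.ne']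
    push_cast at h3
    rw [add_mul] at h3
    rw [abs_le] at h1 h2 h3 ⊢
    constructor <;> linarith [h1.1, h1.2, h2.1, h2.2, h3.1, h3.2]
  exact aux_bounds_of_abs_log (div_pos (mul_pos pa pb) pc) (Real.exp_pos _) habs

lemma aux_pressure {X : Set (Pt k)} {f : ℕ → Pt k → ℝ} (hX : IsSubshift X) (hf : GoodSeq X f)
    (hXne : X.Nonempty) {C P : ℝ} (hC : 1 ≤ C) (hKB : KeyBound X f C P) :
    P = pressure X f := by
  classical
  have hzn : ∀ n : ℕ, ∃ z : (Fin n → Fin k) → Pt k,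
      (∀ u ∈ words X n, z u ∈ cylinder X u) ∧ Zn X f n = Ssum X f z := by
    intro n
    have hspec : ∀ u : Fin n → Fin k, Allowable X u →
        ∃ x ∈ cylinder X u, sSup (f n '' cylinder X u) = f n x := fun u hu =>
      (aux_cylinder_compact hX.1 u).exists_sSup_image_eq hu
        ((hf n).1.mono fun x hx => hx.1)
    refine ⟨fun u => if h : Allowable X u then (hspec u h).choose else hXne.choose, ?_, ?_⟩
    · intro u hu
      have h : Allowable X u := (Finset.mem_filter.mp hu).2
      simp only [dif_pos h]
      exact (hspec u h).choose_spec.1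
    · refine Finset.sum_congr rfl fun u hu => ?_
      have h : Allowable X u := (Finset.mem_filter.mp hu).2
      simp only [dif_pos h]
      exact (hspec u h).choose_spec.2
  have hbound : ∀ n : ℕ, 1 ≤ n → |Real.log (Zn X f n) - n * P| ≤ Real.log C := by
    intro n hn
    obtain ⟨z, hz, hEq⟩ := hzn n
    rw [hEq]
    exact aux_kb_log hf hXne hC hKB hn hz
  have htend : Filter.Tendsto (fun n : ℕ => Real.log (Zn X f n) / n) atTop (nhds P) := by
    have h0 : Filter.Tendsto (fun n : ℕ => Real.log (Zn X f n) / n - P) atTop (nhds 0) := by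
      apply squeeze_zero_norm' (a := fun n : ℕ => Real.log C / n)
      · filter_upwards [Filter.eventually_ge_atTop 1] with n hn
        have hn0 : (0:ℝ) < n := by exact_mod_cast hn
        have h := hbound n hn
        rw [Real.norm_eq_abs]
        have heq : Real.log (Zn X f n) / n - P = (Real.log (Zn X f n) - n * P) / n := by
          field_simp
        rw [heq, abs_div, abs_of_pos hn0]
        exact (div_le_div_iff_of_pos_right hn0).mpr h
      · exact tendsto_const_div_atTop_nhds_zero_nat _
    have := h0.add (tendsto_const_nhds (x := P))
    simpa using this
  exact (htend.limsup_eq).symm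

end Aux


/-- characterization of the BSM property, and the constant `P` is the pressure. -/
theorem stmt3 {k : ℕ} (X : Set (Pt k)) (f : ℕ → Pt k → ℝ)
    (hX : IsSubshift X) (hf : GoodSeq X f) :
    (BSM X f ↔ ∃ C : ℝ, 1 ≤ C ∧ ∃ P : ℝ, KeyBound X f C P) ∧
    (∀ C P : ℝ, 1 ≤ C → KeyBound X f C P → P = pressure X f) := by
  constructor
  · constructor
    · rintro ⟨C, hC, K, hK, hB⟩
      rcases X.eq_empty_or_nonempty with hXe | hXne
      · exact (aux_bsm_empty hXe hC hK hB).elim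
      · exact aux_forward hX hf hXne hC hK hB
    · rintro ⟨C, hC, P, hKB⟩
      rcases X.eq_empty_or_nonempty with hXe | hXne
      · exact (aux_keybound_empty hXe hC hKB).elim
      · exact aux_reverse hf hXne hC hKB
  · intro C P hC hKB
    rcases X.eq_empty_or_nonempty with hXe | hXne
    · exact (aux_keybound_empty hXe hC hKB).elim
    · exact aux_pressure hX hf hXne hC hKB

end Paper
end

section
/- Let X be a one-sided subshift and F = {log f_n} a sequence of positive continuous functions on X. If there exists a Gibbs measure for F with Gibbs constant C₀, then X is right balanced with respect to F with constant C₀³ and K = 1, i.e., for all m, n ∈ ℕ and u ∈ B_m(X): 1/C₀³ ≤ (Σ_{v∈F_n(u)} f_{m+n}(x_{uv})) / (f_m(x_u) Σ_{w∈B_n(X)} f_n(x_w)) ≤ C₀³ for all choices of points in the respective cylinders. -/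
open scoped Classical BigOperators
open Filter MeasureTheory

namespace Paper

variable {k : ℕ}

lemma cyl_meas (X : Set (Pt k)) (hX : IsClosed X) {n : ℕ} (u : Fin n → Fin k) :
    MeasurableSet (cylinder X u) := by
  have h : cylinder X u = X ∩ ⋂ i : Fin n, (fun x : Pt k => x (i:ℕ)) ⁻¹' {u i} := by
    ext x; simp [cylinder, Set.mem_iInter]
  rw [h]
  exact hX.measurableSet.inter (MeasurableSet.iInter fun i =>
    (measurable_pi_apply _) (measurableSet_singleton _))

lemma cylinder_append_subset (X : Set (Pt k)) {m n : ℕ} (u : Fin m → Fin k) (v : Fin n → Fin k) :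
    cylinder X (Fin.append u v) ⊆ cylinder X u := by
  rintro x ⟨hx, hco⟩
  refine ⟨hx, fun i => ?_⟩
  have h := hco (Fin.castAdd n i)
  rwa [Fin.append_left, Fin.coe_castAdd] at h

lemma mem_cylinder_append (X : Set (Pt k)) {m n : ℕ} {u : Fin m → Fin k} (x : Pt k)
    (hx : x ∈ cylinder X u) :
    x ∈ cylinder X (Fin.append u (fun i : Fin n => x (m + i))) := by
  refine ⟨hx.1, fun j => ?_⟩
  induction j using Fin.addCases with
  | left i => rw [Fin.append_left, Fin.coe_castAdd]; exact hx.2 i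
  | right i => rw [Fin.append_right, Fin.coe_natAdd]

lemma sum_measure_Fext (X : Set (Pt k)) (hX : IsClosed X) (μ : Measure (Pt k))
    [IsFiniteMeasure μ] {m : ℕ} (u : Fin m → Fin k) (n : ℕ) :
    ∑ v ∈ Fext X u n, (μ (cylinder X (Fin.append u v))).toReal
      = (μ (cylinder X u)).toReal := by
  have hcover : cylinder X u = ⋃ v ∈ Fext X u n, cylinder X (Fin.append u v) := by
    ext x
    simp only [Set.mem_iUnion, exists_prop]
    constructor
    · intro hx
      exact ⟨fun i : Fin n => x (m + i),
        Finset.mem_filter.mpr ⟨Finset.mem_univ _, ⟨x, mem_cylinder_append X x hx⟩⟩,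
        mem_cylinder_append X x hx⟩
    · rintro ⟨v, -, hv⟩
      exact cylinder_append_subset X u v hv
  have hdisj : (↑(Fext X u n) : Set (Fin n → Fin k)).PairwiseDisjoint
      fun v => cylinder X (Fin.append u v) := by
    intro v _ w _ hvw
    refine Set.disjoint_left.mpr fun x hxv hxw => hvw ?_
    funext i
    have h1 := hxv.2 (Fin.natAdd m i)
    have h2 := hxw.2 (Fin.natAdd m i)
    rw [Fin.append_right] at h1 h2
    rw [← h1, ← h2]
  have hm : μ (cylinder X u) = ∑ v ∈ Fext X u n, μ (cylinder X (Fin.append u v)) := by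
    rw [hcover]
    exact measure_biUnion_finset hdisj fun v _ => cyl_meas X hX _
  rw [hm, ENNReal.toReal_sum fun v _ => measure_ne_top μ _]

lemma sum_measure_words (X : Set (Pt k)) (hX : IsClosed X) (μ : Measure (Pt k))
    [IsProbabilityMeasure μ] (hsupp : μ Xᶜ = 0) (n : ℕ) :
    ∑ w ∈ words X n, (μ (cylinder X w)).toReal = 1 := by
  have hcover : X = ⋃ w ∈ words X n, cylinder X w := by
    ext x
    simp only [Set.mem_iUnion, exists_prop]
    constructor
    · intro hx
      exact ⟨fun i : Fin n => x (i : ℕ),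
        Finset.mem_filter.mpr ⟨Finset.mem_univ _, ⟨x, hx, fun i => rfl⟩⟩,
        hx, fun i => rfl⟩
    · rintro ⟨w, -, hw⟩; exact hw.1
  have hdisj : (↑(words X n) : Set (Fin n → Fin k)).PairwiseDisjoint
      fun w => cylinder X w := by
    intro v _ w _ hvw
    refine Set.disjoint_left.mpr fun x hxv hxw => hvw ?_
    funext i
    rw [← hxv.2 i, ← hxw.2 i]
  have hX1 : μ X = 1 := by
    have h := measure_add_measure_compl (μ := μ) hX.measurableSet
    rw [hsupp, add_zero, measure_univ] at h
    exact h
  have hm : μ X = ∑ w ∈ words X n, μ (cylinder X w) := by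
    conv_lhs => rw [hcover]
    exact measure_biUnion_finset hdisj fun v _ => cyl_meas X hX _
  rw [← ENNReal.toReal_sum fun v _ => measure_ne_top μ _, ← hm, hX1, ENNReal.toReal_one]


lemma gibbs_term {X : Set (Pt k)} {f : ℕ → Pt k → ℝ} {μ : Measure (Pt k)} {P C₀ : ℝ}
    (hf : GoodSeq X f) (hC₀ : 0 < C₀) (hGibbs : GibbsWith X f μ P C₀)
    {n : ℕ} (hn : 0 < n) {u : Fin n → Fin k} (hu : u ∈ words X n)
    {x : Pt k} (hx : x ∈ cylinder X u) :
    Real.exp (-(n:ℝ)*P) * f n x ≤ C₀ * (μ (cylinder X u)).toReal ∧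
    (μ (cylinder X u)).toReal ≤ C₀ * (Real.exp (-(n:ℝ)*P) * f n x) := by
  obtain ⟨hl, hr⟩ := hGibbs n hn u hu x hx
  have hfx : 0 < f n x := (hf n).2 x hx.1
  have he : 0 < Real.exp (-(n:ℝ)*P) * f n x := by positivity
  rw [le_div_iff₀ he] at hl
  rw [div_le_iff₀ he] at hr
  constructor
  · have h' := mul_le_mul_of_nonneg_left hl hC₀.le
    rwa [← mul_assoc, mul_one_div_cancel hC₀.ne', one_mul] at h'
  · linarith

/-- a Gibbs measure with constant `C₀` yields right balancedness with `C₀³`, `K = 1`. -/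
theorem stmt6 {k : ℕ} (X : Set (Pt k)) (f : ℕ → Pt k → ℝ)
    (hX : IsSubshift X) (hf : GoodSeq X f)
    (μ : Measure (Pt k)) (hμprob : IsProbabilityMeasure μ) (hμsupp : μ Xᶜ = 0)
    (P C₀ : ℝ) (hC₀ : 0 < C₀) (hGibbs : GibbsWith X f μ P C₀) :
    RightBalancedWith X f (C₀ ^ 3) 1 := by
  intro m n hm hn u hu xu hxu y hy z hz
  set a : ℝ := Real.exp (-(m:ℝ)*P) with ha
  set b : ℝ := Real.exp (-(n:ℝ)*P) with hb
  have hapos : 0 < a := Real.exp_pos _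
  have hbpos : 0 < b := Real.exp_pos _
  set A : ℝ := ∑ v ∈ Fext X u n, f (m + n) (y v) with hA
  set B : ℝ := f m xu with hB
  set D : ℝ := ∑ w ∈ words X n, f n (z w) with hD
  set Mu : ℝ := (μ (cylinder X u)).toReal with hMu
  have hab : Real.exp (-((m+n : ℕ):ℝ)*P) = a * b := by
    rw [ha, hb, ← Real.exp_add]
    congr 1
    push_cast
    ring
  -- bounds for the (m+n)-sum
  have h12 : a * b * A ≤ C₀ * Mu ∧ Mu ≤ C₀ * (a * b * A) := by
    have hterm : ∀ v ∈ Fext X u n,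
        a * b * f (m + n) (y v) ≤ C₀ * (μ (cylinder X (Fin.append u v))).toReal ∧
        (μ (cylinder X (Fin.append u v))).toReal ≤ C₀ * (a * b * f (m + n) (y v)) := by
      intro v hv
      have hall : Allowable X (Fin.append u v) := (Finset.mem_filter.mp hv).2
      have hw : Fin.append u v ∈ words X (m + n) :=
        Finset.mem_filter.mpr ⟨Finset.mem_univ _, hall⟩
      have := gibbs_term hf hC₀ hGibbs (Nat.add_pos_left hm n) hw (hy v hv)
      rwa [hab] at this
    have hsum := sum_measure_Fext X hX.1 μ u n
    constructor
    · calc a * b * A = ∑ v ∈ Fext X u n, a * b * f (m + n) (y v) := by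
            rw [hA, Finset.mul_sum]
        _ ≤ ∑ v ∈ Fext X u n, C₀ * (μ (cylinder X (Fin.append u v))).toReal :=
            Finset.sum_le_sum fun v hv => (hterm v hv).1
        _ = C₀ * Mu := by rw [← Finset.mul_sum, hsum]
    · calc Mu = ∑ v ∈ Fext X u n, (μ (cylinder X (Fin.append u v))).toReal := hsum.symm
        _ ≤ ∑ v ∈ Fext X u n, C₀ * (a * b * f (m + n) (y v)) :=
            Finset.sum_le_sum fun v hv => (hterm v hv).2
        _ = C₀ * (a * b * A) := by rw [hA, Finset.mul_sum, Finset.mul_sum]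
  obtain ⟨h1, h2⟩ := h12
  -- bounds for u itself
  obtain ⟨h3, h4⟩ := gibbs_term hf hC₀ hGibbs hm hu hxu
  rw [← ha, ← hB, ← hMu] at h3 h4
  -- bounds for the n-sum
  have h56 : b * D ≤ C₀ ∧ 1 ≤ C₀ * (b * D) := by
    have hterm : ∀ w ∈ words X n,
        b * f n (z w) ≤ C₀ * (μ (cylinder X w)).toReal ∧
        (μ (cylinder X w)).toReal ≤ C₀ * (b * f n (z w)) :=
      fun w hw => gibbs_term hf hC₀ hGibbs hn hw (hz w hw)
    have hsum := sum_measure_words X hX.1 μ hμsupp n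
    constructor
    · calc b * D = ∑ w ∈ words X n, b * f n (z w) := by rw [hD, Finset.mul_sum]
        _ ≤ ∑ w ∈ words X n, C₀ * (μ (cylinder X w)).toReal :=
            Finset.sum_le_sum fun w hw => (hterm w hw).1
        _ = C₀ := by rw [← Finset.mul_sum, hsum, mul_one]
    · calc (1:ℝ) = ∑ w ∈ words X n, (μ (cylinder X w)).toReal := hsum.symm
        _ ≤ ∑ w ∈ words X n, C₀ * (b * f n (z w)) :=
            Finset.sum_le_sum fun w hw => (hterm w hw).2
        _ = C₀ * (b * D) := by rw [hD, Finset.mul_sum, Finset.mul_sum]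
  obtain ⟨h5, h6⟩ := h56
  have hBpos : 0 < B := (hf m).2 xu hxu.1
  have hMupos : 0 < Mu := by nlinarith
  have hApos : 0 < A := by nlinarith [mul_pos (mul_pos hC₀ hapos) hbpos]
  have hDpos : 0 < D := by nlinarith [mul_pos hC₀ hbpos]
  have hBD : 0 < B * D := mul_pos hBpos hDpos
  have k1 : b * A ≤ C₀^2 * B := by
    have : a * (b * A) ≤ a * (C₀^2 * B) := by nlinarith
    exact le_of_mul_le_mul_left this hapos
  have k2 : B ≤ C₀^2 * (b * A) := by
    have : a * B ≤ a * (C₀^2 * (b * A)) := by nlinarith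
    exact le_of_mul_le_mul_left this hapos
  constructor
  · rw [div_le_div_iff₀ (by positivity) hBD]
    nlinarith [mul_le_mul_of_nonneg_right k2 hDpos.le,
      mul_le_mul_of_nonneg_left h5 (mul_nonneg (mul_nonneg (sq_nonneg C₀) hApos.le) hC₀.le)]
  · rw [div_le_iff₀ hBD]
    nlinarith [mul_le_mul_of_nonneg_left k1 (mul_pos hC₀ hDpos).le,
      mul_le_mul_of_nonneg_right h6 hApos.le]

end Paper
end

section
/- Let X be a one-sided subshift and F a sequence of positive continuous functions. X is right balanced with respect to F if and only if X is right balanced with respect to F with K = 1; similarly, X is balanced with respect to F if and only if it is balanced with K = 1 in both the right and left balanced conditions. -/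
open scoped Classical BigOperators
open Filter MeasureTheory

namespace Paper

variable {k : ℕ}

section Aux

variable {k : ℕ} {X : Set (Pt k)}

lemma shift_iterate_apply (t : ℕ) (x : Pt k) (i : ℕ) : (shift^[t] x) i = x (i + t) := by
  induction t generalizing x i with
  | zero => rfl
  | succ t ih =>
    rw [Function.iterate_succ_apply, ih]
    rfl

lemma iterate_shift_mem (hX : IsSubshift X) (t : ℕ) {x : Pt k} (hx : x ∈ X) :
    shift^[t] x ∈ X := by
  induction t with
  | zero => exact hx
  | succ t ih => rw [Function.iterate_succ_apply']; exact hX.2 _ ih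

lemma mem_words_iff {n : ℕ} {u : Fin n → Fin k} : u ∈ words X n ↔ Allowable X u := by
  simp [words]

lemma mem_Fext_iff {m n : ℕ} {u : Fin m → Fin k} {v : Fin n → Fin k} :
    v ∈ Fext X u n ↔ Allowable X (Fin.append u v) := by
  simp [Fext]

lemma mem_Pext_iff {m n : ℕ} {u : Fin m → Fin k} {v : Fin n → Fin k} :
    v ∈ Pext X u n ↔ Allowable X (Fin.append v u) := by
  simp [Pext]

lemma cylinder_append_assoc {a b c : ℕ} (u : Fin a → Fin k) (v : Fin b → Fin k)
    (w : Fin c → Fin k) (x : Pt k) :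
    x ∈ cylinder X (Fin.append (Fin.append u v) w) ↔
      x ∈ cylinder X (Fin.append u (Fin.append v w)) := by
  simp only [cylinder, Set.mem_setOf_eq, and_congr_right_iff]
  intro _
  constructor
  · intro h i
    induction i using Fin.addCases with
    | left j =>
      rw [Fin.append_left]
      have := h (Fin.castAdd c (Fin.castAdd b j))
      rw [Fin.append_left, Fin.append_left] at this
      simpa using this
    | right j =>
      rw [Fin.append_right]
      induction j using Fin.addCases with
      | left j2 =>
        rw [Fin.append_left]
        have := h (Fin.castAdd c (Fin.natAdd a j2))
        rw [Fin.append_left, Fin.append_right] at this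
        simpa using this
      | right j2 =>
        rw [Fin.append_right]
        have := h (Fin.natAdd (a + b) j2)
        rw [Fin.append_right] at this
        simpa [Nat.add_assoc] using this
  · intro h i
    induction i using Fin.addCases with
    | left j =>
      rw [Fin.append_left]
      induction j using Fin.addCases with
      | left j2 =>
        rw [Fin.append_left]
        have := h (Fin.castAdd (b + c) j2)
        rw [Fin.append_left] at this
        simpa using this
      | right j2 =>
        rw [Fin.append_right]
        have := h (Fin.natAdd a (Fin.castAdd c j2))
        rw [Fin.append_right, Fin.append_left] at this
        simpa using this
    | right j =>
      rw [Fin.append_right]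
      have := h (Fin.natAdd a (Fin.natAdd b j))
      rw [Fin.append_right, Fin.append_right] at this
      simpa [Nat.add_assoc] using this

lemma allowable_append_assoc {a b c : ℕ} (u : Fin a → Fin k) (v : Fin b → Fin k)
    (w : Fin c → Fin k) :
    Allowable X (Fin.append (Fin.append u v) w) ↔
      Allowable X (Fin.append u (Fin.append v w)) :=
  exists_congr fun x => cylinder_append_assoc u v w x

lemma mem_cylinder_of_append {m n : ℕ} {u : Fin m → Fin k} {v : Fin n → Fin k} {x : Pt k}
    (h : x ∈ cylinder X (Fin.append u v)) : x ∈ cylinder X u := by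
  refine ⟨h.1, fun i => ?_⟩
  have := h.2 (Fin.castAdd n i)
  rw [Fin.append_left] at this
  simpa using this

lemma shift_mem_cylinder_of_append (hX : IsSubshift X) {m n : ℕ} {u : Fin m → Fin k}
    {v : Fin n → Fin k} {x : Pt k}
    (h : x ∈ cylinder X (Fin.append u v)) : shift^[m] x ∈ cylinder X v := by
  refine ⟨iterate_shift_mem hX m h.1, fun i => ?_⟩
  rw [shift_iterate_apply]
  have := h.2 (Fin.natAdd m i)
  rw [Fin.append_right] at this
  simpa [Nat.add_comm] using this

lemma allowable_of_append_left {m n : ℕ} {a : Fin m → Fin k} {b : Fin n → Fin k}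
    (h : Allowable X (Fin.append a b)) : Allowable X a := by
  obtain ⟨x, hx⟩ := h
  exact ⟨x, mem_cylinder_of_append hx⟩

lemma allowable_of_append_right (hX : IsSubshift X) {m n : ℕ} {a : Fin m → Fin k}
    {b : Fin n → Fin k} (h : Allowable X (Fin.append a b)) : Allowable X b := by
  obtain ⟨x, hx⟩ := h
  exact ⟨_, shift_mem_cylinder_of_append hX hx⟩

lemma words_nonempty (hne : X.Nonempty) (n : ℕ) : (words X n).Nonempty := by
  obtain ⟨x, hx⟩ := hne
  exact ⟨fun i => x i, mem_words_iff.mpr ⟨x, hx, fun i => rfl⟩⟩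

lemma sum_Fext_split (X : Set (Pt k)) {m n K' : ℕ} (u : Fin m → Fin k)
    (g : (Fin (n + K') → Fin k) → ℝ) :
    ∑ w ∈ Fext X u (n + K'), g w =
      ∑ v ∈ Fext X u n, ∑ v' ∈ Fext X (Fin.append u v) K', g (Fin.append v v') := by
  rw [Finset.sum_sigma' (Fext X u n) (fun v => Fext X (Fin.append u v) K')
    (fun v v' => g (Fin.append v v'))]
  refine Finset.sum_nbij'
    (fun w => (⟨fun i => w (Fin.castAdd K' i), fun i => w (Fin.natAdd n i)⟩ :
      Σ _v : Fin n → Fin k, Fin K' → Fin k))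
    (fun p => Fin.append p.1 p.2) ?_ ?_ ?_ ?_ ?_
  · intro w hw
    rw [mem_Fext_iff, ← Fin.append_castAdd_natAdd (f := w)] at hw
    refine Finset.mem_sigma.mpr ⟨?_, ?_⟩
    · rw [mem_Fext_iff]
      exact allowable_of_append_left ((allowable_append_assoc _ _ _).mpr hw)
    · rw [mem_Fext_iff]
      exact (allowable_append_assoc _ _ _).mpr hw
  · rintro ⟨v, v'⟩ hp
    rw [Finset.mem_sigma] at hp
    rw [mem_Fext_iff]
    exact (allowable_append_assoc _ _ _).mp (mem_Fext_iff.mp hp.2)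
  · intro w _
    exact Fin.append_castAdd_natAdd
  · rintro ⟨v, v'⟩ _
    simp [Fin.append_left, Fin.append_right]
  · intro w _
    rw [Fin.append_castAdd_natAdd]

lemma sum_Pext_split (hX : IsSubshift X) {m n K' : ℕ} (u : Fin m → Fin k)
    (g : (Fin (K' + n) → Fin k) → ℝ) :
    ∑ w ∈ Pext X u (K' + n), g w =
      ∑ v ∈ Pext X u n, ∑ v' ∈ Pext X (Fin.append v u) K', g (Fin.append v' v) := by
  rw [Finset.sum_sigma' (Pext X u n) (fun v => Pext X (Fin.append v u) K')
    (fun v v' => g (Fin.append v' v))]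
  refine Finset.sum_nbij'
    (fun w => (⟨fun i => w (Fin.natAdd K' i), fun i => w (Fin.castAdd n i)⟩ :
      Σ _v : Fin n → Fin k, Fin K' → Fin k))
    (fun p => Fin.append p.2 p.1) ?_ ?_ ?_ ?_ ?_
  · intro w hw
    rw [mem_Pext_iff, ← Fin.append_castAdd_natAdd (f := w)] at hw
    refine Finset.mem_sigma.mpr ⟨?_, ?_⟩
    · rw [mem_Pext_iff]
      exact allowable_of_append_right hX ((allowable_append_assoc _ _ _).mp hw)
    · rw [mem_Pext_iff]
      exact (allowable_append_assoc _ _ _).mp hw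
  · rintro ⟨v, v'⟩ hp
    rw [Finset.mem_sigma] at hp
    rw [mem_Pext_iff]
    exact (allowable_append_assoc _ _ _).mpr (mem_Pext_iff.mp hp.2)
  · intro w _
    exact Fin.append_castAdd_natAdd
  · rintro ⟨v, v'⟩ _
    simp [Fin.append_left, Fin.append_right]
  · intro w _
    rw [Fin.append_castAdd_natAdd]

lemma field_id1 (a b c d e : ℝ) (hc : c ≠ 0) (hd : d ≠ 0) :
    (a * (b / (c * d))) * (e * d) = (a * (e * b)) / c := by
  field_simp

lemma field_id2 (a q r s A : ℝ) (hs : s ≠ 0) :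
    (a * (q * r / s)) * A = (a * (A * q) * r) / s := by
  field_simp

end Aux
section Reduce

variable {k : ℕ} {X : Set (Pt k)} {f : ℕ → Pt k → ℝ}

lemma rightBalancedWith_mono {C C' : ℝ} {K : ℕ} (hC : 0 < C) (hCC' : C ≤ C')
    (h : RightBalancedWith X f C K) : RightBalancedWith X f C' K := by
  intro m n hm hn u hu xu hxu y hy z hz
  obtain ⟨h1, h2⟩ := h m n hm hn u hu xu hxu y hy z hz
  exact ⟨le_trans (one_div_le_one_div_of_le hC hCC') h1, le_trans h2 hCC'⟩

lemma leftBalancedWith_mono {C C' : ℝ} {K : ℕ} (hC : 0 < C) (hCC' : C ≤ C')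
    (h : LeftBalancedWith X f C K) : LeftBalancedWith X f C' K := by
  intro m n hm hn u hu xu hxu y hy z hz
  obtain ⟨h1, h2⟩ := h m n hm hn u hu xu hxu y hy z hz
  exact ⟨le_trans (one_div_le_one_div_of_le hC hCC') h1, le_trans h2 hCC'⟩

lemma right_reduce (hX : IsSubshift X) (hf : GoodSeq X f) {C : ℝ} {K : ℕ} (hC : 1 ≤ C)
    (h : RightBalancedWith X f C K) :
    ∃ C' : ℝ, 1 ≤ C' ∧ RightBalancedWith X f C' 1 := by
  have hCpos : 0 < C := lt_of_lt_of_le one_pos hC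
  by_cases hne : X.Nonempty
  swap
  · refine ⟨C, hC, ?_⟩
    intro m n hm hn u hu xu hxu y hy z hz
    exact absurd ⟨xu, hxu.1⟩ hne
  have hXcomp : IsCompact X := hX.1.isCompact
  have hmin : ∀ j : ℕ, ∃ x, x ∈ X ∧ ∀ y ∈ X, f j x ≤ f j y := by
    intro j
    obtain ⟨x, hxX, hx⟩ := hXcomp.exists_isMinOn hne (hf j).1
    exact ⟨x, hxX, fun y hy => hx hy⟩
  have hmax : ∀ j : ℕ, ∃ x, x ∈ X ∧ ∀ y ∈ X, f j y ≤ f j x := by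
    intro j
    obtain ⟨x, hxX, hx⟩ := hXcomp.exists_isMaxOn hne (hf j).1
    exact ⟨x, hxX, fun y hy => hx hy⟩
  choose xlo hxloX hxlo using hmin
  choose xhi hxhiX hxhi using hmax
  set N : ℕ → ℝ := fun j => ((words X j).card : ℝ) with hNdef
  set lo : ℕ → ℝ := fun j => f j (xlo j) with hlodef
  set hi : ℕ → ℝ := fun j => f j (xhi j) with hhidef
  have hlopos : ∀ j, 0 < lo j := fun j => (hf j).2 _ (hxloX j)
  have hhipos : ∀ j, 0 < hi j := fun j => (hf j).2 _ (hxhiX j)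
  have hNpos : ∀ j, 0 < N j := fun j => by
    show (0:ℝ) < ((words X j).card : ℝ)
    exact Nat.cast_pos.mpr (Finset.card_pos.mpr (words_nonempty hne j))
  have hsum_lb : ∀ (j : ℕ) (z : (Fin j → Fin k) → Pt k),
      (∀ w ∈ words X j, z w ∈ cylinder X w) →
      N j * lo j ≤ ∑ w ∈ words X j, f j (z w) := by
    intro j z hz
    calc N j * lo j = ∑ _w ∈ words X j, lo j := by
          rw [Finset.sum_const, nsmul_eq_mul]
      _ ≤ ∑ w ∈ words X j, f j (z w) :=
          Finset.sum_le_sum fun w hw => hxlo j _ ((hz w hw).1)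
  have hsum_ub : ∀ (j : ℕ) (z : (Fin j → Fin k) → Pt k),
      (∀ w ∈ words X j, z w ∈ cylinder X w) →
      (∑ w ∈ words X j, f j (z w)) ≤ N j * hi j := by
    intro j z hz
    calc (∑ w ∈ words X j, f j (z w)) ≤ ∑ _w ∈ words X j, hi j :=
          Finset.sum_le_sum fun w hw => hxhi j _ ((hz w hw).1)
      _ = N j * hi j := by rw [Finset.sum_const, nsmul_eq_mul]
  have hsum_pos : ∀ (j : ℕ) (z : (Fin j → Fin k) → Pt k),
      (∀ w ∈ words X j, z w ∈ cylinder X w) →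
      0 < ∑ w ∈ words X j, f j (z w) := fun j z hz =>
    lt_of_lt_of_le (mul_pos (hNpos j) (hlopos j)) (hsum_lb j z hz)
  have he1nn : ∀ j : ℕ,
      0 ≤ C ^ 2 * ((N (j + K) * hi (j + K)) / ((N K * lo K) * (N j * lo j))) := fun j =>
    mul_nonneg (sq_nonneg C) (div_nonneg
      (mul_nonneg (hNpos _).le (hhipos _).le)
      (mul_nonneg (mul_nonneg (hNpos _).le (hlopos _).le)
        (mul_nonneg (hNpos _).le (hlopos _).le)))
  have he2nn : ∀ j : ℕ,
      0 ≤ C ^ 2 * ((N K * hi K) * (N j * hi j) / (N (j + K) * lo (j + K))) := fun j =>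
    mul_nonneg (sq_nonneg C) (div_nonneg
      (mul_nonneg (mul_nonneg (hNpos _).le (hhipos _).le)
        (mul_nonneg (hNpos _).le (hhipos _).le))
      (mul_nonneg (hNpos _).le (hlopos _).le))
  set C' : ℝ := C + ∑ i ∈ Finset.range K,
      max (C ^ 2 * ((N (i + K) * hi (i + K)) / ((N K * lo K) * (N i * lo i))))
        (C ^ 2 * ((N K * hi K) * (N i * hi i) / (N (i + K) * lo (i + K)))) with hC'def
  have htermnn : ∀ i : ℕ, (0:ℝ) ≤
      max (C ^ 2 * ((N (i + K) * hi (i + K)) / ((N K * lo K) * (N i * lo i))))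
        (C ^ 2 * ((N K * hi K) * (N i * hi i) / (N (i + K) * lo (i + K)))) := fun i =>
    le_trans (he1nn i) (le_max_left _ _)
  have hCC' : C ≤ C' := le_add_of_nonneg_right (Finset.sum_nonneg fun i _ => htermnn i)
  have hC'1 : 1 ≤ C' := le_trans hC hCC'
  have hC'pos : 0 < C' := lt_of_lt_of_le one_pos hC'1
  have hterm_le : ∀ i ∈ Finset.range K,
      max (C ^ 2 * ((N (i + K) * hi (i + K)) / ((N K * lo K) * (N i * lo i))))
        (C ^ 2 * ((N K * hi K) * (N i * hi i) / (N (i + K) * lo (i + K)))) ≤ C' := by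
    intro i hi0
    have h1 := Finset.single_le_sum (f := fun i =>
      max (C ^ 2 * ((N (i + K) * hi (i + K)) / ((N K * lo K) * (N i * lo i))))
        (C ^ 2 * ((N K * hi K) * (N i * hi i) / (N (i + K) * lo (i + K)))))
      (fun i _ => htermnn i) hi0
    rw [hC'def]
    linarith
  refine ⟨C', hC'1, ?_⟩
  intro m n hm hn1 u hu xu hxu y hy z hz
  have hBpos : 0 < f m xu := (hf m).2 xu hxu.1
  have hWnpos : 0 < ∑ w ∈ words X n, f n (z w) := hsum_pos n z hz
  by_cases hKn : K ≤ n
  · obtain ⟨h1, h2⟩ := h m n hm hKn u hu xu hxu y hy z hz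
    exact ⟨le_trans (one_div_le_one_div_of_le hCpos hCC') h1, le_trans h2 hCC'⟩
  push_neg at hKn
  have hnK : n ∈ Finset.range K := Finset.mem_range.mpr hKn
  set y' : (Fin (n + K) → Fin k) → Pt k := fun w =>
    if hw : (cylinder X (Fin.append u w)).Nonempty then hw.some else xu with hy'def
  set z' : (Fin (n + K) → Fin k) → Pt k := fun w =>
    if hw : (cylinder X w).Nonempty then hw.some else xu with hz'def
  set zK : (Fin K → Fin k) → Pt k := fun w =>
    if hw : (cylinder X w).Nonempty then hw.some else xu with hzKdef
  have hy' : ∀ w ∈ Fext X u (n + K), y' w ∈ cylinder X (Fin.append u w) := by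
    intro w hw
    have hall : (cylinder X (Fin.append u w)).Nonempty := mem_Fext_iff.mp hw
    rw [hy'def]
    simp only [dif_pos hall]
    exact hall.some_mem
  have hz' : ∀ w ∈ words X (n + K), z' w ∈ cylinder X w := by
    intro w hw
    have hall : (cylinder X w).Nonempty := mem_words_iff.mp hw
    rw [hz'def]
    simp only [dif_pos hall]
    exact hall.some_mem
  have hzK : ∀ w ∈ words X K, zK w ∈ cylinder X w := by
    intro w hw
    have hall : (cylinder X w).Nonempty := mem_words_iff.mp hw
    rw [hzKdef]
    simp only [dif_pos hall]
    exact hall.some_mem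
  obtain ⟨hT1, hT2⟩ := h m (n + K) hm (Nat.le_add_left K n) u hu xu hxu y' hy' z' hz'
  rw [show m + (n + K) = m + n + K from (Nat.add_assoc m n K).symm] at hT1 hT2
  set W' : ℝ := ∑ w ∈ words X (n + K), f (n + K) (z' w) with hW'def
  set WK : ℝ := ∑ w ∈ words X K, f K (zK w) with hWKdef
  set T : ℝ := ∑ v ∈ Fext X u (n + K), f (m + n + K) (y' v) with hTdef
  set A : ℝ := ∑ v ∈ Fext X u n, f (m + n) (y v) with hAdef
  set Wn : ℝ := ∑ w ∈ words X n, f n (z w) with hWndef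
  set B : ℝ := f m xu with hBdef
  have hW'pos : 0 < W' := hsum_pos _ _ hz'
  have hWKpos : 0 < WK := hsum_pos _ _ hzK
  have hDpos : 0 < B * W' := mul_pos hBpos hW'pos
  have hT_ub : T ≤ C * (B * W') := by rwa [div_le_iff₀ hDpos] at hT2
  have hT_lb : B * W' ≤ C * T := by
    rw [le_div_iff₀ hDpos] at hT1
    calc B * W' = C * (1 / C * (B * W')) := by rw [one_div, mul_inv_cancel_left₀ hCpos.ne']
      _ ≤ C * T := mul_le_mul_of_nonneg_left hT1 hCpos.le
  have hstep2 : ∀ v ∈ Fext X u n,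
      f (m + n) (y v) * WK ≤
        C * ∑ v' ∈ Fext X (Fin.append u v) K, f (m + n + K) (y' (Fin.append v v')) ∧
      (∑ v' ∈ Fext X (Fin.append u v) K, f (m + n + K) (y' (Fin.append v v'))) ≤
        C * (f (m + n) (y v) * WK) := by
    intro v hv
    have huv : Fin.append u v ∈ words X (m + n) := mem_words_iff.mpr (mem_Fext_iff.mp hv)
    have hyv := hy v hv
    have hfyv : 0 < f (m + n) (y v) := (hf (m + n)).2 _ hyv.1
    have hyv' : ∀ v' ∈ Fext X (Fin.append u v) K,
        y' (Fin.append v v') ∈ cylinder X (Fin.append (Fin.append u v) v') := by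
      intro v' hv'
      have hall : Allowable X (Fin.append u (Fin.append v v')) :=
        (allowable_append_assoc u v v').mp (mem_Fext_iff.mp hv')
      exact (cylinder_append_assoc u v v' _).mpr (hy' _ (mem_Fext_iff.mpr hall))
    obtain ⟨hs1, hs2⟩ := h (m + n) K (Nat.add_pos_left hm n) le_rfl (Fin.append u v) huv
      (y v) hyv (fun v' => y' (Fin.append v v')) hyv' zK hzK
    have hdpos : 0 < f (m + n) (y v) * WK := mul_pos hfyv hWKpos
    constructor
    · rw [le_div_iff₀ hdpos] at hs1
      calc f (m + n) (y v) * WK = C * (1 / C * (f (m + n) (y v) * WK)) := by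
              rw [one_div, mul_inv_cancel_left₀ hCpos.ne']
        _ ≤ C * _ := mul_le_mul_of_nonneg_left hs1 hCpos.le
    · rwa [div_le_iff₀ hdpos] at hs2
  have hsplit : T = ∑ v ∈ Fext X u n,
      ∑ v' ∈ Fext X (Fin.append u v) K, f (m + n + K) (y' (Fin.append v v')) :=
    sum_Fext_split X u (fun w => f (m + n + K) (y' w))
  have hAW_le : A * WK ≤ C * T := by
    calc A * WK = ∑ v ∈ Fext X u n, f (m + n) (y v) * WK := by
              rw [hAdef]; exact Finset.sum_mul _ _ _
      _ ≤ ∑ v ∈ Fext X u n,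
            C * ∑ v' ∈ Fext X (Fin.append u v) K, f (m + n + K) (y' (Fin.append v v')) :=
          Finset.sum_le_sum fun v hv => (hstep2 v hv).1
      _ = C * ∑ v ∈ Fext X u n,
            ∑ v' ∈ Fext X (Fin.append u v) K, f (m + n + K) (y' (Fin.append v v')) :=
          (Finset.mul_sum _ _ _).symm
      _ = C * T := by rw [← hsplit]
  have hT_le : T ≤ C * (A * WK) := by
    calc T = ∑ v ∈ Fext X u n,
            ∑ v' ∈ Fext X (Fin.append u v) K, f (m + n + K) (y' (Fin.append v v')) := hsplit
      _ ≤ ∑ v ∈ Fext X u n, C * (f (m + n) (y v) * WK) :=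
          Finset.sum_le_sum fun v hv => (hstep2 v hv).2
      _ = C * ∑ v ∈ Fext X u n, f (m + n) (y v) * WK := (Finset.mul_sum _ _ _).symm
      _ = C * (A * WK) := by rw [hAdef]; rw [Finset.sum_mul]
  have key_ub : A * WK ≤ C ^ 2 * (B * W') := by
    calc A * WK ≤ C * T := hAW_le
      _ ≤ C * (C * (B * W')) := mul_le_mul_of_nonneg_left hT_ub hCpos.le
      _ = C ^ 2 * (B * W') := by ring
  have key_lb : B * W' ≤ C ^ 2 * (A * WK) := by
    calc B * W' ≤ C * T := hT_lb
      _ ≤ C * (C * (A * WK)) := mul_le_mul_of_nonneg_left hT_le hCpos.le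
      _ = C ^ 2 * (A * WK) := by ring
  have hApos : 0 < A := by
    nlinarith [lt_of_lt_of_le hDpos key_lb, mul_pos (pow_pos hCpos 2) hWKpos]
  have hW'_ub : W' ≤ N (n + K) * hi (n + K) := hsum_ub _ _ hz'
  have hW'_lb : N (n + K) * lo (n + K) ≤ W' := hsum_lb _ _ hz'
  have hWK_ub : WK ≤ N K * hi K := hsum_ub _ _ hzK
  have hWK_lb : N K * lo K ≤ WK := hsum_lb _ _ hzK
  have hWn_ub : Wn ≤ N n * hi n := hsum_ub _ _ hz
  have hWn_lb : N n * lo n ≤ Wn := hsum_lb _ _ hz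
  have hcE_le : C ^ 2 * ((N (n + K) * hi (n + K)) / ((N K * lo K) * (N n * lo n))) ≤ C' :=
    le_trans (le_max_left _ _) (hterm_le n hnK)
  have hcF_le : C ^ 2 * ((N K * hi K) * (N n * hi n) / (N (n + K) * lo (n + K))) ≤ C' :=
    le_trans (le_max_right _ _) (hterm_le n hnK)
  have hP2pos : 0 < N K * lo K := mul_pos (hNpos K) (hlopos K)
  have hP3pos : 0 < N n * lo n := mul_pos (hNpos n) (hlopos n)
  have hQ1pos : 0 < N (n + K) * lo (n + K) := mul_pos (hNpos _) (hlopos _)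
  have s1 : A * (N K * lo K) ≤ C ^ 2 * (B * (N (n + K) * hi (n + K))) := by
    calc A * (N K * lo K) ≤ A * WK := by
          exact mul_le_mul_of_nonneg_left hWK_lb hApos.le
      _ ≤ C ^ 2 * (B * W') := key_ub
      _ ≤ C ^ 2 * (B * (N (n + K) * hi (n + K))) :=
          mul_le_mul_of_nonneg_left (mul_le_mul_of_nonneg_left hW'_ub hBpos.le) (sq_nonneg C)
  have goal_ub : A ≤ C' * (B * Wn) := by
    have h2 : A ≤ (C ^ 2 * ((N (n + K) * hi (n + K)) / ((N K * lo K) * (N n * lo n)))) *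
        (B * (N n * lo n)) := by
      rw [field_id1 (C ^ 2) (N (n + K) * hi (n + K)) (N K * lo K) (N n * lo n) B
        hP2pos.ne' hP3pos.ne']
      rw [le_div_iff₀ hP2pos]
      exact s1
    calc A ≤ (C ^ 2 * ((N (n + K) * hi (n + K)) / ((N K * lo K) * (N n * lo n)))) *
        (B * (N n * lo n)) := h2
      _ ≤ (C ^ 2 * ((N (n + K) * hi (n + K)) / ((N K * lo K) * (N n * lo n)))) *
        (B * Wn) := mul_le_mul_of_nonneg_left
          (mul_le_mul_of_nonneg_left hWn_lb hBpos.le) (he1nn n)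
      _ ≤ C' * (B * Wn) :=
          mul_le_mul_of_nonneg_right hcE_le (mul_nonneg hBpos.le hWnpos.le)
  have s2 : B * (N (n + K) * lo (n + K)) ≤ C ^ 2 * (A * (N K * hi K)) := by
    calc B * (N (n + K) * lo (n + K)) ≤ B * W' :=
          mul_le_mul_of_nonneg_left hW'_lb hBpos.le
      _ ≤ C ^ 2 * (A * WK) := key_lb
      _ ≤ C ^ 2 * (A * (N K * hi K)) :=
          mul_le_mul_of_nonneg_left (mul_le_mul_of_nonneg_left hWK_ub hApos.le) (sq_nonneg C)
  have goal_lb : B * Wn ≤ C' * A := by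
    have h3 : B * (N n * hi n) ≤
        (C ^ 2 * ((N K * hi K) * (N n * hi n) / (N (n + K) * lo (n + K)))) * A := by
      rw [field_id2 (C ^ 2) (N K * hi K) (N n * hi n) (N (n + K) * lo (n + K)) A
        hQ1pos.ne']
      rw [le_div_iff₀ hQ1pos]
      calc B * (N n * hi n) * (N (n + K) * lo (n + K)) =
            (B * (N (n + K) * lo (n + K))) * (N n * hi n) := by ring
        _ ≤ (C ^ 2 * (A * (N K * hi K))) * (N n * hi n) :=
            mul_le_mul_of_nonneg_right s2 (mul_nonneg (hNpos n).le (hhipos n).le)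
    calc B * Wn ≤ B * (N n * hi n) := mul_le_mul_of_nonneg_left hWn_ub hBpos.le
      _ ≤ (C ^ 2 * ((N K * hi K) * (N n * hi n) / (N (n + K) * lo (n + K)))) * A := h3
      _ ≤ C' * A := mul_le_mul_of_nonneg_right hcF_le hApos.le
  have hBWnpos : 0 < B * Wn := mul_pos hBpos hWnpos
  constructor
  · rw [le_div_iff₀ hBWnpos]
    calc 1 / C' * (B * Wn) ≤ 1 / C' * (C' * A) :=
        mul_le_mul_of_nonneg_left goal_lb (one_div_nonneg.mpr hC'pos.le)
      _ = A := by rw [one_div, inv_mul_cancel_left₀ hC'pos.ne']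
  · rw [div_le_iff₀ hBWnpos]
    exact goal_ub

lemma left_reduce (hX : IsSubshift X) (hf : GoodSeq X f) {C : ℝ} {K : ℕ} (hC : 1 ≤ C)
    (h : LeftBalancedWith X f C K) :
    ∃ C' : ℝ, 1 ≤ C' ∧ LeftBalancedWith X f C' 1 := by
  have hCpos : 0 < C := lt_of_lt_of_le one_pos hC
  by_cases hne : X.Nonempty
  swap
  · refine ⟨C, hC, ?_⟩
    intro m n hm hn u hu xu hxu y hy z hz
    exact absurd ⟨xu, hxu.1⟩ hne
  have hXcomp : IsCompact X := hX.1.isCompact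
  have hmin : ∀ j : ℕ, ∃ x, x ∈ X ∧ ∀ y ∈ X, f j x ≤ f j y := by
    intro j
    obtain ⟨x, hxX, hx⟩ := hXcomp.exists_isMinOn hne (hf j).1
    exact ⟨x, hxX, fun y hy => hx hy⟩
  have hmax : ∀ j : ℕ, ∃ x, x ∈ X ∧ ∀ y ∈ X, f j y ≤ f j x := by
    intro j
    obtain ⟨x, hxX, hx⟩ := hXcomp.exists_isMaxOn hne (hf j).1
    exact ⟨x, hxX, fun y hy => hx hy⟩
  choose xlo hxloX hxlo using hmin
  choose xhi hxhiX hxhi using hmax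
  set N : ℕ → ℝ := fun j => ((words X j).card : ℝ) with hNdef
  set lo : ℕ → ℝ := fun j => f j (xlo j) with hlodef
  set hi : ℕ → ℝ := fun j => f j (xhi j) with hhidef
  have hlopos : ∀ j, 0 < lo j := fun j => (hf j).2 _ (hxloX j)
  have hhipos : ∀ j, 0 < hi j := fun j => (hf j).2 _ (hxhiX j)
  have hNpos : ∀ j, 0 < N j := fun j => by
    show (0:ℝ) < ((words X j).card : ℝ)
    exact Nat.cast_pos.mpr (Finset.card_pos.mpr (words_nonempty hne j))
  have hsum_lb : ∀ (j : ℕ) (z : (Fin j → Fin k) → Pt k),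
      (∀ w ∈ words X j, z w ∈ cylinder X w) →
      N j * lo j ≤ ∑ w ∈ words X j, f j (z w) := by
    intro j z hz
    calc N j * lo j = ∑ _w ∈ words X j, lo j := by
          rw [Finset.sum_const, nsmul_eq_mul]
      _ ≤ ∑ w ∈ words X j, f j (z w) :=
          Finset.sum_le_sum fun w hw => hxlo j _ ((hz w hw).1)
  have hsum_ub : ∀ (j : ℕ) (z : (Fin j → Fin k) → Pt k),
      (∀ w ∈ words X j, z w ∈ cylinder X w) →
      (∑ w ∈ words X j, f j (z w)) ≤ N j * hi j := by
    intro j z hz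
    calc (∑ w ∈ words X j, f j (z w)) ≤ ∑ _w ∈ words X j, hi j :=
          Finset.sum_le_sum fun w hw => hxhi j _ ((hz w hw).1)
      _ = N j * hi j := by rw [Finset.sum_const, nsmul_eq_mul]
  have hsum_pos : ∀ (j : ℕ) (z : (Fin j → Fin k) → Pt k),
      (∀ w ∈ words X j, z w ∈ cylinder X w) →
      0 < ∑ w ∈ words X j, f j (z w) := fun j z hz =>
    lt_of_lt_of_le (mul_pos (hNpos j) (hlopos j)) (hsum_lb j z hz)
  have he1nn : ∀ j : ℕ,
      0 ≤ C ^ 2 * ((N (K + j) * hi (K + j)) / ((N K * lo K) * (N j * lo j))) := fun j =>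
    mul_nonneg (sq_nonneg C) (div_nonneg
      (mul_nonneg (hNpos _).le (hhipos _).le)
      (mul_nonneg (mul_nonneg (hNpos _).le (hlopos _).le)
        (mul_nonneg (hNpos _).le (hlopos _).le)))
  set C' : ℝ := C + ∑ i ∈ Finset.range K,
      max (C ^ 2 * ((N (K + i) * hi (K + i)) / ((N K * lo K) * (N i * lo i))))
        (C ^ 2 * ((N K * hi K) * (N i * hi i) / (N (K + i) * lo (K + i)))) with hC'def
  have htermnn : ∀ i : ℕ, (0:ℝ) ≤
      max (C ^ 2 * ((N (K + i) * hi (K + i)) / ((N K * lo K) * (N i * lo i))))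
        (C ^ 2 * ((N K * hi K) * (N i * hi i) / (N (K + i) * lo (K + i)))) := fun i =>
    le_trans (he1nn i) (le_max_left _ _)
  have hCC' : C ≤ C' := le_add_of_nonneg_right (Finset.sum_nonneg fun i _ => htermnn i)
  have hC'1 : 1 ≤ C' := le_trans hC hCC'
  have hC'pos : 0 < C' := lt_of_lt_of_le one_pos hC'1
  have hterm_le : ∀ i ∈ Finset.range K,
      max (C ^ 2 * ((N (K + i) * hi (K + i)) / ((N K * lo K) * (N i * lo i))))
        (C ^ 2 * ((N K * hi K) * (N i * hi i) / (N (K + i) * lo (K + i)))) ≤ C' := by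
    intro i hi0
    have h1 := Finset.single_le_sum (f := fun i =>
      max (C ^ 2 * ((N (K + i) * hi (K + i)) / ((N K * lo K) * (N i * lo i))))
        (C ^ 2 * ((N K * hi K) * (N i * hi i) / (N (K + i) * lo (K + i)))))
      (fun i _ => htermnn i) hi0
    rw [hC'def]
    linarith
  refine ⟨C', hC'1, ?_⟩
  intro m n hm hn1 u hu xu hxu y hy z hz
  have hBpos : 0 < f m xu := (hf m).2 xu hxu.1
  have hWnpos : 0 < ∑ w ∈ words X n, f n (z w) := hsum_pos n z hz
  by_cases hKn : K ≤ n
  · obtain ⟨h1, h2⟩ := h m n hm hKn u hu xu hxu y hy z hz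
    exact ⟨le_trans (one_div_le_one_div_of_le hCpos hCC') h1, le_trans h2 hCC'⟩
  push_neg at hKn
  have hnK : n ∈ Finset.range K := Finset.mem_range.mpr hKn
  set y' : (Fin (K + n) → Fin k) → Pt k := fun w =>
    if hw : (cylinder X (Fin.append w u)).Nonempty then hw.some else xu with hy'def
  set z' : (Fin (K + n) → Fin k) → Pt k := fun w =>
    if hw : (cylinder X w).Nonempty then hw.some else xu with hz'def
  set zK : (Fin K → Fin k) → Pt k := fun w =>
    if hw : (cylinder X w).Nonempty then hw.some else xu with hzKdef
  have hy' : ∀ w ∈ Pext X u (K + n), y' w ∈ cylinder X (Fin.append w u) := by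
    intro w hw
    have hall : (cylinder X (Fin.append w u)).Nonempty := mem_Pext_iff.mp hw
    rw [hy'def]
    simp only [dif_pos hall]
    exact hall.some_mem
  have hz' : ∀ w ∈ words X (K + n), z' w ∈ cylinder X w := by
    intro w hw
    have hall : (cylinder X w).Nonempty := mem_words_iff.mp hw
    rw [hz'def]
    simp only [dif_pos hall]
    exact hall.some_mem
  have hzK : ∀ w ∈ words X K, zK w ∈ cylinder X w := by
    intro w hw
    have hall : (cylinder X w).Nonempty := mem_words_iff.mp hw
    rw [hzKdef]
    simp only [dif_pos hall]
    exact hall.some_mem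
  obtain ⟨hT1, hT2⟩ := h m (K + n) hm (Nat.le_add_right K n) u hu xu hxu y' hy' z' hz'
  rw [show K + n + m = K + (n + m) from Nat.add_assoc K n m] at hT1 hT2
  set W' : ℝ := ∑ w ∈ words X (K + n), f (K + n) (z' w) with hW'def
  set WK : ℝ := ∑ w ∈ words X K, f K (zK w) with hWKdef
  set T : ℝ := ∑ v ∈ Pext X u (K + n), f (K + (n + m)) (y' v) with hTdef
  set A : ℝ := ∑ v ∈ Pext X u n, f (n + m) (y v) with hAdef
  set Wn : ℝ := ∑ w ∈ words X n, f n (z w) with hWndef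
  set B : ℝ := f m xu with hBdef
  have hW'pos : 0 < W' := hsum_pos _ _ hz'
  have hWKpos : 0 < WK := hsum_pos _ _ hzK
  have hDpos : 0 < B * W' := mul_pos hBpos hW'pos
  have hT_ub : T ≤ C * (B * W') := by rwa [div_le_iff₀ hDpos] at hT2
  have hT_lb : B * W' ≤ C * T := by
    rw [le_div_iff₀ hDpos] at hT1
    calc B * W' = C * (1 / C * (B * W')) := by rw [one_div, mul_inv_cancel_left₀ hCpos.ne']
      _ ≤ C * T := mul_le_mul_of_nonneg_left hT1 hCpos.le
  have hstep2 : ∀ v ∈ Pext X u n,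
      f (n + m) (y v) * WK ≤
        C * ∑ v' ∈ Pext X (Fin.append v u) K, f (K + (n + m)) (y' (Fin.append v' v)) ∧
      (∑ v' ∈ Pext X (Fin.append v u) K, f (K + (n + m)) (y' (Fin.append v' v))) ≤
        C * (f (n + m) (y v) * WK) := by
    intro v hv
    have huv : Fin.append v u ∈ words X (n + m) := mem_words_iff.mpr (mem_Pext_iff.mp hv)
    have hyv := hy v hv
    have hfyv : 0 < f (n + m) (y v) := (hf (n + m)).2 _ hyv.1
    have hyv' : ∀ v' ∈ Pext X (Fin.append v u) K,
        y' (Fin.append v' v) ∈ cylinder X (Fin.append v' (Fin.append v u)) := by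
      intro v' hv'
      have hall : Allowable X (Fin.append (Fin.append v' v) u) :=
        (allowable_append_assoc v' v u).mpr (mem_Pext_iff.mp hv')
      exact (cylinder_append_assoc v' v u _).mp (hy' _ (mem_Pext_iff.mpr hall))
    obtain ⟨hs1, hs2⟩ := h (n + m) K (Nat.add_pos_left hn1 m) le_rfl (Fin.append v u) huv
      (y v) hyv (fun v' => y' (Fin.append v' v)) hyv' zK hzK
    have hdpos : 0 < f (n + m) (y v) * WK := mul_pos hfyv hWKpos
    constructor
    · rw [le_div_iff₀ hdpos] at hs1
      calc f (n + m) (y v) * WK = C * (1 / C * (f (n + m) (y v) * WK)) := by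
              rw [one_div, mul_inv_cancel_left₀ hCpos.ne']
        _ ≤ C * _ := mul_le_mul_of_nonneg_left hs1 hCpos.le
    · rwa [div_le_iff₀ hdpos] at hs2
  have hsplit : T = ∑ v ∈ Pext X u n,
      ∑ v' ∈ Pext X (Fin.append v u) K, f (K + (n + m)) (y' (Fin.append v' v)) :=
    sum_Pext_split hX u (fun w => f (K + (n + m)) (y' w))
  have hAW_le : A * WK ≤ C * T := by
    calc A * WK = ∑ v ∈ Pext X u n, f (n + m) (y v) * WK := by
              rw [hAdef]; exact Finset.sum_mul _ _ _
      _ ≤ ∑ v ∈ Pext X u n,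
            C * ∑ v' ∈ Pext X (Fin.append v u) K, f (K + (n + m)) (y' (Fin.append v' v)) :=
          Finset.sum_le_sum fun v hv => (hstep2 v hv).1
      _ = C * ∑ v ∈ Pext X u n,
            ∑ v' ∈ Pext X (Fin.append v u) K, f (K + (n + m)) (y' (Fin.append v' v)) :=
          (Finset.mul_sum _ _ _).symm
      _ = C * T := by rw [← hsplit]
  have hT_le : T ≤ C * (A * WK) := by
    calc T = ∑ v ∈ Pext X u n,
            ∑ v' ∈ Pext X (Fin.append v u) K, f (K + (n + m)) (y' (Fin.append v' v)) := hsplit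
      _ ≤ ∑ v ∈ Pext X u n, C * (f (n + m) (y v) * WK) :=
          Finset.sum_le_sum fun v hv => (hstep2 v hv).2
      _ = C * ∑ v ∈ Pext X u n, f (n + m) (y v) * WK := (Finset.mul_sum _ _ _).symm
      _ = C * (A * WK) := by rw [hAdef]; rw [Finset.sum_mul]
  have key_ub : A * WK ≤ C ^ 2 * (B * W') := by
    calc A * WK ≤ C * T := hAW_le
      _ ≤ C * (C * (B * W')) := mul_le_mul_of_nonneg_left hT_ub hCpos.le
      _ = C ^ 2 * (B * W') := by ring
  have key_lb : B * W' ≤ C ^ 2 * (A * WK) := by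
    calc B * W' ≤ C * T := hT_lb
      _ ≤ C * (C * (A * WK)) := mul_le_mul_of_nonneg_left hT_le hCpos.le
      _ = C ^ 2 * (A * WK) := by ring
  have hApos : 0 < A := by
    nlinarith [lt_of_lt_of_le hDpos key_lb, mul_pos (pow_pos hCpos 2) hWKpos]
  have hW'_ub : W' ≤ N (K + n) * hi (K + n) := hsum_ub _ _ hz'
  have hW'_lb : N (K + n) * lo (K + n) ≤ W' := hsum_lb _ _ hz'
  have hWK_ub : WK ≤ N K * hi K := hsum_ub _ _ hzK
  have hWK_lb : N K * lo K ≤ WK := hsum_lb _ _ hzK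
  have hWn_ub : Wn ≤ N n * hi n := hsum_ub _ _ hz
  have hWn_lb : N n * lo n ≤ Wn := hsum_lb _ _ hz
  have hcE_le : C ^ 2 * ((N (K + n) * hi (K + n)) / ((N K * lo K) * (N n * lo n))) ≤ C' :=
    le_trans (le_max_left _ _) (hterm_le n hnK)
  have hcF_le : C ^ 2 * ((N K * hi K) * (N n * hi n) / (N (K + n) * lo (K + n))) ≤ C' :=
    le_trans (le_max_right _ _) (hterm_le n hnK)
  have hP2pos : 0 < N K * lo K := mul_pos (hNpos K) (hlopos K)
  have hP3pos : 0 < N n * lo n := mul_pos (hNpos n) (hlopos n)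
  have hQ1pos : 0 < N (K + n) * lo (K + n) := mul_pos (hNpos _) (hlopos _)
  have s1 : A * (N K * lo K) ≤ C ^ 2 * (B * (N (K + n) * hi (K + n))) := by
    calc A * (N K * lo K) ≤ A * WK := mul_le_mul_of_nonneg_left hWK_lb hApos.le
      _ ≤ C ^ 2 * (B * W') := key_ub
      _ ≤ C ^ 2 * (B * (N (K + n) * hi (K + n))) :=
          mul_le_mul_of_nonneg_left (mul_le_mul_of_nonneg_left hW'_ub hBpos.le) (sq_nonneg C)
  have goal_ub : A ≤ C' * (B * Wn) := by
    have h2 : A ≤ (C ^ 2 * ((N (K + n) * hi (K + n)) / ((N K * lo K) * (N n * lo n)))) *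
        (B * (N n * lo n)) := by
      rw [field_id1 (C ^ 2) (N (K + n) * hi (K + n)) (N K * lo K) (N n * lo n) B
        hP2pos.ne' hP3pos.ne']
      rw [le_div_iff₀ hP2pos]
      exact s1
    calc A ≤ (C ^ 2 * ((N (K + n) * hi (K + n)) / ((N K * lo K) * (N n * lo n)))) *
        (B * (N n * lo n)) := h2
      _ ≤ (C ^ 2 * ((N (K + n) * hi (K + n)) / ((N K * lo K) * (N n * lo n)))) *
        (B * Wn) := mul_le_mul_of_nonneg_left
          (mul_le_mul_of_nonneg_left hWn_lb hBpos.le) (he1nn n)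
      _ ≤ C' * (B * Wn) :=
          mul_le_mul_of_nonneg_right hcE_le (mul_nonneg hBpos.le hWnpos.le)
  have s2 : B * (N (K + n) * lo (K + n)) ≤ C ^ 2 * (A * (N K * hi K)) := by
    calc B * (N (K + n) * lo (K + n)) ≤ B * W' :=
          mul_le_mul_of_nonneg_left hW'_lb hBpos.le
      _ ≤ C ^ 2 * (A * WK) := key_lb
      _ ≤ C ^ 2 * (A * (N K * hi K)) :=
          mul_le_mul_of_nonneg_left (mul_le_mul_of_nonneg_left hWK_ub hApos.le) (sq_nonneg C)
  have goal_lb : B * Wn ≤ C' * A := by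
    have h3 : B * (N n * hi n) ≤
        (C ^ 2 * ((N K * hi K) * (N n * hi n) / (N (K + n) * lo (K + n)))) * A := by
      rw [field_id2 (C ^ 2) (N K * hi K) (N n * hi n) (N (K + n) * lo (K + n)) A
        hQ1pos.ne']
      rw [le_div_iff₀ hQ1pos]
      calc B * (N n * hi n) * (N (K + n) * lo (K + n)) =
            (B * (N (K + n) * lo (K + n))) * (N n * hi n) := by ring
        _ ≤ (C ^ 2 * (A * (N K * hi K))) * (N n * hi n) :=
            mul_le_mul_of_nonneg_right s2 (mul_nonneg (hNpos n).le (hhipos n).le)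
    calc B * Wn ≤ B * (N n * hi n) := mul_le_mul_of_nonneg_left hWn_ub hBpos.le
      _ ≤ (C ^ 2 * ((N K * hi K) * (N n * hi n) / (N (K + n) * lo (K + n)))) * A := h3
      _ ≤ C' * A := mul_le_mul_of_nonneg_right hcF_le hApos.le
  have hBWnpos : 0 < B * Wn := mul_pos hBpos hWnpos
  constructor
  · rw [le_div_iff₀ hBWnpos]
    calc 1 / C' * (B * Wn) ≤ 1 / C' * (C' * A) :=
        mul_le_mul_of_nonneg_left goal_lb (one_div_nonneg.mpr hC'pos.le)
      _ = A := by rw [one_div, inv_mul_cancel_left₀ hC'pos.ne']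
  · rw [div_le_iff₀ hBWnpos]
    exact goal_ub

end Reduce
/-- (right) balanced iff (right) balanced with `K = 1`. -/
theorem stmt7 {k : ℕ} (X : Set (Pt k)) (f : ℕ → Pt k → ℝ)
    (hX : IsSubshift X) (hf : GoodSeq X f) :
    (RightBalanced X f ↔ ∃ C : ℝ, 1 ≤ C ∧ RightBalancedWith X f C 1) ∧
    (Balanced X f ↔ ∃ C : ℝ, 1 ≤ C ∧ RightBalancedWith X f C 1 ∧ LeftBalancedWith X f C 1) := by
  constructor
  · constructor
    · rintro ⟨C, hC, K, hK, h⟩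
      exact right_reduce hX hf hC h
    · rintro ⟨C, hC, h⟩
      exact ⟨C, hC, 1, le_rfl, h⟩
  · constructor
    · rintro ⟨⟨C1, hC1, K1, hK1, h1⟩, ⟨C2, hC2, K2, hK2, h2⟩⟩
      obtain ⟨Cr, hCr, hr⟩ := right_reduce hX hf hC1 h1
      obtain ⟨Cl, hCl, hl⟩ := left_reduce hX hf hC2 h2
      refine ⟨max Cr Cl, le_trans hCr (le_max_left _ _), ?_, ?_⟩
      · exact rightBalancedWith_mono (lt_of_lt_of_le one_pos hCr) (le_max_left _ _) hr
      · exact leftBalancedWith_mono (lt_of_lt_of_le one_pos hCl) (le_max_right _ _) hl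
    · rintro ⟨C, hC, h1, h2⟩
      exact ⟨⟨C, hC, 1, le_rfl, h1⟩, ⟨C, hC, 1, le_rfl, h2⟩⟩

end Paper
end
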